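/- arXiv:1906.06120 — 7 statements merged into one kernel-verified Lean document; each statement's English description precedes it below -/
import Mathlib

section
/- Let N > n, Δ ⊆ S_{n,N}, σ : Δ → ℝ, β > 0, and let λ* : Λ_{n,N} ∪ Δ → ℝ be harmonic in Λ_{n,N} with boundary condition σ on Δ. Let H : ℝ^{Λ_{n,N}} → ℝ be smooth with Z = ∫ exp(−β[H(φ) − ∑_{x ∈ Λ_{n,N}} λ*(x)φ_x]) dφ < ∞, and let μ be the probability measure on ℝ^{Λ_{n,N}} with density Z^{−1} exp(−β[H(φ) − ∑_{x ∈ Λ_{n,N}} λ*(x)φ_x]) with respect to Lebesgue measure. Then for every smooth compactly supported f : ℝ^{Λ_{n,N}} → ℝ, ∫ (Lf)(φ) μ(dφ) = 0. -/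
open Finset

/-- A point of the `d = k+1` dimensional lattice `ℤ^d`, written as
(first coordinate, remaining `k` coordinates). -/
abbrev Pt (k : ℕ) := ℤ × (Fin k → ℤ)

/-- Nearest neighbors: `|x - y| = 1` (ℓ¹-distance one). -/
def isNN {k : ℕ} (x y : Pt k) : Prop :=
  |x.1 - y.1| + ∑ i, |x.2 i - y.2 i| = 1

instance {k : ℕ} (x y : Pt k) : Decidable (isNN x y) := by
  unfold isNN; infer_instance

/-- The domain 𝒞 = {x₁ ≥ n} ∪ {x₁ ≤ -n} ∪ C_n. -/
def inC (k n : ℕ) (x : Pt k) : Prop :=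
  (n : ℤ) ≤ x.1 ∨ x.1 ≤ -(n : ℤ) ∨ (|x.1| ≤ (n : ℤ) ∧ ∀ i, |x.2 i| ≤ (n : ℤ))

instance (k n : ℕ) : DecidablePred (inC k n) := fun x => by
  unfold inC; infer_instance

/-- The `2(k+1)` nearest neighbors of `x` in `ℤ^{k+1}`. -/
def nbrFinset {k : ℕ} (x : Pt k) : Finset (Pt k) :=
  {(x.1 + 1, x.2), (x.1 - 1, x.2)} ∪
    (Finset.univ : Finset (Fin k × Bool)).image
      (fun p => (x.1, Function.update x.2 p.1 (x.2 p.1 + if p.2 then 1 else -1)))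

/-- ψ is harmonic on 𝒞: for every x ∈ 𝒞, the sum of ψ(y) − ψ(x) over
nearest neighbors y of x lying in 𝒞 vanishes. -/
def HarmonicOnC (k n : ℕ) (ψ : Pt k → ℝ) : Prop :=
  ∀ x : Pt k, inC k n x →
    ∑ y ∈ (nbrFinset x).filter (fun y => inC k n y), (ψ y - ψ x) = 0

/-- The flux through the section Σ_ξ of the channel. -/
noncomputable def flux (k n : ℕ) (ψ : Pt k → ℝ) (ξ : ℤ) : ℝ :=
  ∑ v ∈ Fintype.piFinset (fun _ : Fin k => Finset.Icc (-(n : ℤ)) (n : ℤ)),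
    (ψ (ξ - 1, v) - ψ (ξ, v))

/-- The finite volume Λ_{n,N} = 𝒞 ∩ [−N, N]^d, as a finite set. -/
noncomputable def Lam (k n N : ℕ) : Finset (Pt k) :=
  ((Finset.Icc (-(N : ℤ)) (N : ℤ)) ×ˢ
      Fintype.piFinset (fun _ : Fin k => Finset.Icc (-(N : ℤ)) (N : ℤ))).filter
    (inC k n)

/-- The shell S_{n,N} = Λ_{n,N+1} \ Λ_{n,N}. -/
noncomputable def Sshell (k n N : ℕ) : Finset (Pt k) := Lam k n (N + 1) \ Lam k n N

/-- `u` is harmonic in Λ_{n,N} with boundary condition σ on Δ: it agrees with σ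
on Δ and for every x ∈ Λ_{n,N},
∑_{y ∈ Λ, y∼x} (u x − u y) + ∑_{y ∈ Δ, y∼x} (u x − σ y) = 0. -/
def HarmBC (k n N : ℕ) (Δ : Finset (Pt k)) (σ : Pt k → ℝ) (u : Pt k → ℝ) : Prop :=
  (∀ y ∈ Δ, u y = σ y) ∧
  ∀ x ∈ Lam k n N,
    (∑ y ∈ (Lam k n N).filter (fun y => isNN x y), (u x - u y)) +
      (∑ y ∈ Δ.filter (fun y => isNN x y), (u x - σ y)) = 0

open MeasureTheory

/-- Partial derivative ∂f/∂φ_x of a function of finitely many real variables. -/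
noncomputable def pd {ι : Type*} [Fintype ι] [DecidableEq ι]
    (f : (ι → ℝ) → ℝ) (x : ι) (φ : ι → ℝ) : ℝ :=
  fderiv ℝ f φ (Pi.single x 1)

/-- The bond operator
L_{x,y} f = −(∂H/∂φ_x − ∂H/∂φ_y)(∂f/∂φ_x − ∂f/∂φ_y) + β⁻¹(∂/∂φ_x − ∂/∂φ_y)² f. -/
noncomputable def Lxy {ι : Type*} [Fintype ι] [DecidableEq ι] (β : ℝ)
    (H : (ι → ℝ) → ℝ) (x y : ι) (f : (ι → ℝ) → ℝ) (φ : ι → ℝ) : ℝ :=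
  -((pd H x φ - pd H y φ) * (pd f x φ - pd f y φ)) +
    β⁻¹ * (pd (pd f x) x φ - pd (pd f x) y φ - pd (pd f y) x φ + pd (pd f y) y φ)

/-- The boundary operator
L̄_{x} f = −(∂H/∂φ_x − s) ∂f/∂φ_x + β⁻¹ ∂²f/∂φ_x², with chemical potential s. -/
noncomputable def Lbar {ι : Type*} [Fintype ι] [DecidableEq ι] (β : ℝ)
    (H : (ι → ℝ) → ℝ) (x : ι) (s : ℝ) (f : (ι → ℝ) → ℝ) (φ : ι → ℝ) : ℝ :=
  -((pd H x φ - s) * pd f x φ) + β⁻¹ * pd (pd f x) x φ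

/-- The full generator L = ∑_{{x,y}⊆Λ, x∼y} L_{x,y} + ∑_{x∈Λ}∑_{y∈Δ, y∼x} L̄_{x,y},
the first (unordered-pair) sum realized as half the ordered double sum, the
summand being symmetric in (x,y). -/
noncomputable def Gen (k n N : ℕ) (β : ℝ) (Δ : Finset (Pt k)) (σ : Pt k → ℝ)
    (H : (↥(Lam k n N) → ℝ) → ℝ) (f : (↥(Lam k n N) → ℝ) → ℝ)
    (φ : ↥(Lam k n N) → ℝ) : ℝ :=
  (1 / 2) * (∑ x : ↥(Lam k n N), ∑ y : ↥(Lam k n N),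
      if isNN (x : Pt k) (y : Pt k) then Lxy β H x y f φ else 0) +
    ∑ x : ↥(Lam k n N), ∑ y ∈ Δ.filter (fun y => isNN (x : Pt k) y),
      Lbar β H x (σ y) f φ

/-! ### Auxiliary lemmas -/

section Aux

variable {ι : Type*} [Fintype ι] [DecidableEq ι]

lemma pd_continuous {g : (ι → ℝ) → ℝ} (hg : ContDiff ℝ 1 g) (x : ι) :
    Continuous (pd g x) := by
  unfold pd
  exact (ContinuousLinearMap.apply ℝ ℝ (Pi.single x (1:ℝ))).continuous.comp
    (hg.continuous_fderiv one_ne_zero)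

lemma pd_hasCompactSupport {g : (ι → ℝ) → ℝ} (hs : HasCompactSupport g) (x : ι) :
    HasCompactSupport (pd g x) :=
  (hs.fderiv ℝ).comp_left (g := fun L : (ι → ℝ) →L[ℝ] ℝ => L (Pi.single x 1)) rfl

lemma pd_contDiff_top {f : (ι → ℝ) → ℝ} (hf : ContDiff ℝ (⊤ : ℕ∞) f) (x : ι) :
    ContDiff ℝ (⊤ : ℕ∞) (pd f x) := by
  unfold pd
  exact (ContinuousLinearMap.apply ℝ ℝ (Pi.single x (1:ℝ))).contDiff.comp
    (hf.fderiv_right (m := (⊤ : ℕ∞)) (by simp))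

lemma pd_sub {a b : (ι → ℝ) → ℝ} {φ : ι → ℝ} (ha : DifferentiableAt ℝ a φ)
    (hb : DifferentiableAt ℝ b φ) (x : ι) :
    pd (fun ψ => a ψ - b ψ) x φ = pd a x φ - pd b x φ := by
  unfold pd; rw [fderiv_fun_sub ha hb]; simp

lemma pd_mul {a b : (ι → ℝ) → ℝ} {φ : ι → ℝ} (ha : DifferentiableAt ℝ a φ)
    (hb : DifferentiableAt ℝ b φ) (x : ι) :
    pd (fun ψ => a ψ * b ψ) x φ = pd a x φ * b φ + a φ * pd b x φ := by
  unfold pd; rw [fderiv_fun_mul ha hb]; simp; ring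

lemma pd_const_mul {a : (ι → ℝ) → ℝ} {φ : ι → ℝ} (ha : DifferentiableAt ℝ a φ)
    (c : ℝ) (x : ι) :
    pd (fun ψ => c * a ψ) x φ = c * pd a x φ := by
  unfold pd; rw [fderiv_const_mul ha]; simp

lemma pd_exp {a : (ι → ℝ) → ℝ} {φ : ι → ℝ} (ha : DifferentiableAt ℝ a φ) (x : ι) :
    pd (fun ψ => Real.exp (a ψ)) x φ = Real.exp (a φ) * pd a x φ := by
  unfold pd; rw [fderiv_exp ha]; simp

noncomputable def linPart (lam : ι → ℝ) : (ι → ℝ) →L[ℝ] ℝ :=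
  ∑ z, lam z • ContinuousLinearMap.proj z

lemma linPart_apply (lam : ι → ℝ) (ψ : ι → ℝ) : linPart lam ψ = ∑ z, lam z * ψ z := by
  simp [linPart]

lemma pd_linear (lam : ι → ℝ) (x : ι) (φ : ι → ℝ) :
    pd (fun ψ => ∑ z, lam z * ψ z) x φ = lam x := by
  have h : (fun ψ : ι → ℝ => ∑ z, lam z * ψ z) = ⇑(linPart lam) := by
    funext ψ; rw [linPart_apply]
  unfold pd
  rw [h, ContinuousLinearMap.fderiv, linPart_apply]
  simp [Pi.single_apply, mul_ite]

lemma diff_linear (lam : ι → ℝ) (φ : ι → ℝ) :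
    DifferentiableAt ℝ (fun ψ : ι → ℝ => ∑ z, lam z * ψ z) φ := by
  have h : (fun ψ : ι → ℝ => ∑ z, lam z * ψ z) = ⇑(linPart lam) := by
    funext ψ; rw [linPart_apply]
  rw [h]; exact (linPart lam).differentiableAt

lemma oneD {h h' : ℝ → ℝ} (hd : ∀ t, HasDerivAt h (h' t) t)
    (hc : Continuous h') (hs : HasCompactSupport h) :
    ∫ t : ℝ, h' t = 0 := by
  have hderiv : deriv h = h' := funext fun t => (hd t).deriv
  have hsupp' : Function.support h' ⊆ tsupport h := by
    rw [← hderiv]; exact support_deriv_subset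
  obtain ⟨R, hR⟩ : ∃ R : ℝ, tsupport h ⊆ Set.Icc (-R) R := by
    obtain ⟨R, hR⟩ := hs.isBounded.subset_closedBall 0
    refine ⟨|R|, fun x hx => ?_⟩
    have := hR hx
    rw [Metric.mem_closedBall, Real.dist_eq, sub_zero] at this
    exact abs_le.mp (this.trans (le_abs_self R))
  set S := |R| + 1 with hS
  have habs1 : R ≤ |R| := le_abs_self R
  have habs2 : -|R| ≤ R := neg_abs_le R
  have hRS : Set.Icc (-R) R ⊆ Set.Ioc (-S) S := fun x hx =>
    ⟨by nlinarith [hx.1], by nlinarith [hx.2]⟩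
  have hSS : -S ≤ S := by nlinarith
  have h0 : ∀ t, t ∉ Set.Ioc (-S) S → h' t = 0 := fun t ht => by
    by_contra hne
    exact ht (hRS (hR (hsupp' hne)))
  have hzero : ∀ t, t ∉ Set.Icc (-R) R → h t = 0 := fun t ht =>
    image_eq_zero_of_notMem_tsupport (fun hc => ht (hR hc))
  calc ∫ t : ℝ, h' t = ∫ t in Set.Ioc (-S) S, h' t :=
        (setIntegral_eq_integral_of_forall_compl_eq_zero h0).symm
    _ = ∫ t in (-S)..S, h' t := (intervalIntegral.integral_of_le hSS).symm
    _ = h S - h (-S) := intervalIntegral.integral_eq_sub_of_hasDerivAt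
        (fun t _ => hd t) (hc.intervalIntegrable _ _)
    _ = 0 := by
        rw [hzero S (by simp only [Set.mem_Icc, not_and_or]; right; push_neg; nlinarith),
          hzero (-S) (by simp only [Set.mem_Icc, not_and_or]; left; push_neg; nlinarith), sub_zero]

lemma line_integral_pd_zero (g : (ι → ℝ) → ℝ) (hg : ContDiff ℝ 1 g)
    (hs : HasCompactSupport g) (x : ι) (c : ι → ℝ) :
    ∫ t : ℝ, pd g x (Function.update c x t) = 0 := by
  have hd : ∀ t : ℝ, HasDerivAt (fun s => g (Function.update c x s))
      (pd g x (Function.update c x t)) t := fun t =>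
    ((hg.differentiable one_ne_zero _).hasFDerivAt).comp_hasDerivAt t (hasDerivAt_update c x t)
  have hcont : Continuous fun t => pd g x (Function.update c x t) :=
    (pd_continuous hg x).comp (continuous_const.update x continuous_id)
  have hcs : HasCompactSupport fun s => g (Function.update c x s) := by
    refine HasCompactSupport.intro (K := (fun φ : ι → ℝ => φ x) '' tsupport g)
      (hs.image (continuous_apply x)) ?_
    intro t ht
    by_contra hne
    exact ht ⟨Function.update c x t, subset_tsupport g hne, by simp⟩
  exact oneD hd hcont hcs

lemma integral_pd_eq_zero_fin (m : ℕ) (g : (Fin (m+1) → ℝ) → ℝ) (hg : ContDiff ℝ 1 g)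
    (hs : HasCompactSupport g) (i : Fin (m+1)) :
    ∫ φ : Fin (m+1) → ℝ, pd g i φ = 0 := by
  set e := MeasurableEquiv.piFinSuccAbove (fun _ : Fin (m+1) => ℝ) i with he
  have hmp : MeasurePreserving e volume volume :=
    volume_preserving_piFinSuccAbove (fun _ : Fin (m+1) => ℝ) i
  set F := pd g i with hF
  have hFc : Continuous F := pd_continuous hg i
  have hFi : Integrable F := hFc.integrable_of_hasCompactSupport (pd_hasCompactSupport hs i)
  have h1 : ∫ φ, F φ = ∫ z : ℝ × (Fin m → ℝ), F (e.symm z) :=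
    ((hmp.symm e).integral_comp e.symm.measurableEmbedding F).symm
  rw [h1]
  rw [show (volume : Measure (ℝ × (Fin m → ℝ))) = (volume : Measure ℝ).prod volume from rfl]
  have hFi' : Integrable (fun z : ℝ × (Fin m → ℝ) => F (e.symm z))
      ((volume : Measure ℝ).prod volume) :=
    ((hmp.symm e).integrable_comp_emb e.symm.measurableEmbedding).mpr hFi
  rw [integral_prod_symm _ hFi']
  have hinner : ∀ b : Fin m → ℝ, ∫ t : ℝ, F (e.symm (t, b)) = 0 := by
    intro b
    have hsymm : ∀ t : ℝ, e.symm (t, b) = Function.update (i.insertNth 0 b) i t := by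
      intro t
      have h2 : e.symm (t, b) = i.insertNth t b := rfl
      rw [h2, ← Fin.update_insertNth]
    simp_rw [hsymm]
    exact line_integral_pd_zero g hg hs i _
  simp_rw [hinner]
  simp

lemma integral_pd_eq_zero (g : (ι → ℝ) → ℝ) (hg : ContDiff ℝ 1 g)
    (hs : HasCompactSupport g) (x : ι) :
    ∫ φ : ι → ℝ, pd g x φ = 0 := by
  obtain ⟨m, hm⟩ : ∃ m, Fintype.card ι = m + 1 :=
    ⟨Fintype.card ι - 1, (Nat.succ_pred_eq_of_pos (Fintype.card_pos_iff.mpr ⟨x⟩)).symm⟩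
  have σ : Fin (m+1) ≃ ι := (finCongr hm.symm).trans (Fintype.equivFin ι).symm
  set E := MeasurableEquiv.piCongrLeft (fun _ : ι => ℝ) σ with hE
  have hmp : MeasurePreserving E volume volume :=
    volume_measurePreserving_piCongrLeft (fun _ : ι => ℝ) σ
  have happ : ∀ ψ : Fin (m+1) → ℝ, E ψ = ψ ∘ σ.symm := by
    intro ψ; funext j
    show (Equiv.piCongrLeft (fun _ : ι => ℝ) σ) ψ j = ψ (σ.symm j)
    rw [Equiv.piCongrLeft_apply_eq_cast]; simp
  have h1 : ∫ φ : ι → ℝ, pd g x φ = ∫ ψ : Fin (m+1) → ℝ, pd g x (E ψ) :=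
    (hmp.integral_comp E.measurableEmbedding _).symm
  rw [h1]
  set L : (Fin (m+1) → ℝ) →L[ℝ] (ι → ℝ) :=
    { toFun := fun ψ => ψ ∘ σ.symm,
      map_add' := fun _ _ => rfl,
      map_smul' := fun _ _ => rfl,
      cont := by continuity } with hL
  set g' : (Fin (m+1) → ℝ) → ℝ := fun ψ => g (L ψ) with hg'
  have hg'c : ContDiff ℝ 1 g' := hg.comp (L.contDiff)
  have hg's : HasCompactSupport g' := by
    refine HasCompactSupport.intro (K := (fun φ : ι → ℝ => φ ∘ σ) '' tsupport g)
      (hs.image (by continuity)) ?_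
    intro ψ hψ
    by_contra hne
    refine hψ ⟨L ψ, subset_tsupport g hne, ?_⟩
    funext j; simp [hL, Function.comp]
  have hkey : ∀ ψ, pd g x (E ψ) = pd g' (σ.symm x) ψ := by
    intro ψ
    rw [happ]
    show fderiv ℝ g (ψ ∘ σ.symm) (Pi.single x 1) = fderiv ℝ g' ψ (Pi.single (σ.symm x) 1)
    have hcomp : fderiv ℝ g' ψ = (fderiv ℝ g (L ψ)).comp L := by
      rw [hg']
      exact (fderiv_comp ψ (hg.differentiable one_ne_zero _) L.differentiableAt).trans
        (by rw [L.fderiv])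
    rw [hcomp]
    have hsing : L (Pi.single (σ.symm x) 1) = Pi.single x 1 := by
      funext j
      simp only [hL, ContinuousLinearMap.coe_mk', LinearMap.coe_mk, AddHom.coe_mk,
        Function.comp_apply]
      rcases eq_or_ne j x with rfl | hj
      · simp
      · rw [Pi.single_eq_of_ne hj, Pi.single_eq_of_ne]
        intro hc; exact hj (by rw [← Equiv.apply_symm_apply σ x, ← hc, Equiv.apply_symm_apply])
    show fderiv ℝ g (ψ ∘ σ.symm) (Pi.single x 1) = fderiv ℝ g (L ψ) (L (Pi.single (σ.symm x) 1))
    rw [hsing]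
    rfl
  simp_rw [hkey]
  exact integral_pd_eq_zero_fin m g' hg'c hg's (σ.symm x)

end Aux

section Rho

variable {ι : Type*} [Fintype ι] [DecidableEq ι]

noncomputable def rho (β : ℝ) (H : (ι → ℝ) → ℝ) (lam : ι → ℝ) : (ι → ℝ) → ℝ :=
  fun φ => Real.exp (-β * (H φ - ∑ z, lam z * φ z))


lemma hcsSub {α : Type*} [TopologicalSpace α] {f g : α → ℝ}
    (hf : HasCompactSupport f) (hg : HasCompactSupport g) :
    HasCompactSupport (fun x => f x - g x) :=
  hf.comp₂_left hg (sub_zero 0)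

lemma hcsAdd {α : Type*} [TopologicalSpace α] {f g : α → ℝ}
    (hf : HasCompactSupport f) (hg : HasCompactSupport g) :
    HasCompactSupport (fun x => f x + g x) :=
  hf.comp₂_left hg (add_zero 0)

lemma hcsNeg {α : Type*} [TopologicalSpace α] {f : α → ℝ}
    (hf : HasCompactSupport f) : HasCompactSupport (fun x => -(f x)) :=
  hf.comp_left (g := fun t : ℝ => -t) neg_zero

variable {β : ℝ} {H : (ι → ℝ) → ℝ} {lam : ι → ℝ}

lemma rho_contDiff (hH : ContDiff ℝ (⊤ : ℕ∞) H) : ContDiff ℝ (⊤ : ℕ∞) (rho β H lam) := by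
  have h : (fun ψ : ι → ℝ => ∑ z, lam z * ψ z) = ⇑(linPart lam) := by
    funext ψ; rw [linPart_apply]
  have hlin : ContDiff ℝ (⊤ : ℕ∞) (fun ψ : ι → ℝ => ∑ z, lam z * ψ z) := by
    rw [h]; exact (linPart lam).contDiff
  exact (contDiff_const.mul (hH.sub hlin)).exp

lemma pd_rho (hH : ContDiff ℝ (⊤ : ℕ∞) H) (x : ι) (φ : ι → ℝ) :
    pd (rho β H lam) x φ = (-β * (pd H x φ - lam x)) * rho β H lam φ := by
  have hHd : DifferentiableAt ℝ H φ := hH.differentiable (by simp) φ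
  have hld := diff_linear lam φ
  unfold rho
  rw [pd_exp (by exact (differentiableAt_const _).mul (hHd.sub hld)) x,
    pd_const_mul (hHd.fun_sub hld) _ x, pd_sub hHd hld x, pd_linear lam x φ]
  ring

lemma diff_rho (hH : ContDiff ℝ (⊤ : ℕ∞) H) (φ : ι → ℝ) :
    DifferentiableAt ℝ (rho β H lam) φ :=
  (rho_contDiff hH).differentiable (by simp) φ

variable {f : (ι → ℝ) → ℝ}

lemma integrable_pd_mul_rho (hH : ContDiff ℝ (⊤ : ℕ∞) H) (hf : ContDiff ℝ (⊤ : ℕ∞) f)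
    (hsupp : HasCompactSupport f) (x : ι) :
    Integrable (fun φ : ι → ℝ => pd f x φ * rho β H lam φ) :=
  ((pd_continuous (hf.of_le (by simp)) x).mul
    (rho_contDiff hH).continuous).integrable_of_hasCompactSupport
    ((pd_hasCompactSupport hsupp x).mul_right)

lemma bond_integral (hβ : β ≠ 0) (hH : ContDiff ℝ (⊤ : ℕ∞) H) (hf : ContDiff ℝ (⊤ : ℕ∞) f)
    (hsupp : HasCompactSupport f) (x y : ι) :
    ∫ φ : ι → ℝ, Lxy β H x y f φ * rho β H lam φ
      = -(lam x - lam y) * ((∫ φ : ι → ℝ, pd f x φ * rho β H lam φ)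
          - ∫ φ : ι → ℝ, pd f y φ * rho β H lam φ) := by
  set G : (ι → ℝ) → ℝ := fun ψ => (pd f x ψ - pd f y ψ) * rho β H lam ψ with hG
  have hGc : ContDiff ℝ (⊤ : ℕ∞) G :=
    ((pd_contDiff_top hf x).sub (pd_contDiff_top hf y)).mul (rho_contDiff hH)
  have hGs : HasCompactSupport G :=
    HasCompactSupport.mul_right
      (hcsSub (pd_hasCompactSupport hsupp x) (pd_hasCompactSupport hsupp y))
  have hdfx : ∀ φ, DifferentiableAt ℝ (pd f x) φ :=
    fun φ => (pd_contDiff_top hf x).differentiable (by simp) φ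
  have hdfy : ∀ φ, DifferentiableAt ℝ (pd f y) φ :=
    fun φ => (pd_contDiff_top hf y).differentiable (by simp) φ
  have hpt : ∀ φ, Lxy β H x y f φ * rho β H lam φ
      = β⁻¹ * (pd G x φ - pd G y φ)
        + (-(lam x - lam y)) * (pd f x φ * rho β H lam φ - pd f y φ * rho β H lam φ) := by
    intro φ
    have hpdGx : pd G x φ = (pd (pd f x) x φ - pd (pd f y) x φ) * rho β H lam φ
        + (pd f x φ - pd f y φ) * ((-β * (pd H x φ - lam x)) * rho β H lam φ) := by
      rw [hG, pd_mul ((hdfx φ).fun_sub (hdfy φ)) (diff_rho hH φ) x,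
        pd_sub (hdfx φ) (hdfy φ) x, pd_rho hH x φ]
    have hpdGy : pd G y φ = (pd (pd f x) y φ - pd (pd f y) y φ) * rho β H lam φ
        + (pd f x φ - pd f y φ) * ((-β * (pd H y φ - lam y)) * rho β H lam φ) := by
      rw [hG, pd_mul ((hdfx φ).fun_sub (hdfy φ)) (diff_rho hH φ) y,
        pd_sub (hdfx φ) (hdfy φ) y, pd_rho hH y φ]
    rw [hpdGx, hpdGy]
    unfold Lxy
    field_simp
    ring
  have iGx : Integrable (fun φ : ι → ℝ => pd G x φ) :=
    (pd_continuous (hGc.of_le (by simp)) x).integrable_of_hasCompactSupport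
      (pd_hasCompactSupport hGs x)
  have iGy : Integrable (fun φ : ι → ℝ => pd G y φ) :=
    (pd_continuous (hGc.of_le (by simp)) y).integrable_of_hasCompactSupport
      (pd_hasCompactSupport hGs y)
  have ifx := integrable_pd_mul_rho (β := β) (lam := lam) hH hf hsupp x
  have ify := integrable_pd_mul_rho (β := β) (lam := lam) hH hf hsupp y
  have h1 : Integrable (fun φ : ι → ℝ => β⁻¹ * (pd G x φ - pd G y φ)) :=
    (iGx.sub iGy).const_mul _
  have h2 : Integrable (fun φ : ι → ℝ =>
      (-(lam x - lam y)) * (pd f x φ * rho β H lam φ - pd f y φ * rho β H lam φ)) :=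
    (ifx.sub ify).const_mul _
  calc ∫ φ : ι → ℝ, Lxy β H x y f φ * rho β H lam φ
      = ∫ φ : ι → ℝ, (β⁻¹ * (pd G x φ - pd G y φ)
          + (-(lam x - lam y)) * (pd f x φ * rho β H lam φ - pd f y φ * rho β H lam φ)) :=
        integral_congr_ae (Filter.Eventually.of_forall hpt)
    _ = β⁻¹ * ((∫ φ : ι → ℝ, pd G x φ) - ∫ φ : ι → ℝ, pd G y φ)
          + (-(lam x - lam y)) * ((∫ φ : ι → ℝ, pd f x φ * rho β H lam φ)
            - ∫ φ : ι → ℝ, pd f y φ * rho β H lam φ) := by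
        rw [integral_add h1 h2, integral_const_mul, integral_const_mul,
          integral_sub iGx iGy, integral_sub ifx ify]
    _ = -(lam x - lam y) * ((∫ φ : ι → ℝ, pd f x φ * rho β H lam φ)
          - ∫ φ : ι → ℝ, pd f y φ * rho β H lam φ) := by
        rw [show (∫ φ : ι → ℝ, pd G x φ) = 0 from
            integral_pd_eq_zero G (hGc.of_le (by simp)) hGs x,
          show (∫ φ : ι → ℝ, pd G y φ) = 0 from
            integral_pd_eq_zero G (hGc.of_le (by simp)) hGs y]
        ring

lemma boundary_integral (hβ : β ≠ 0) (hH : ContDiff ℝ (⊤ : ℕ∞) H) (hf : ContDiff ℝ (⊤ : ℕ∞) f)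
    (hsupp : HasCompactSupport f) (x : ι) (s : ℝ) :
    ∫ φ : ι → ℝ, Lbar β H x s f φ * rho β H lam φ
      = (s - lam x) * ∫ φ : ι → ℝ, pd f x φ * rho β H lam φ := by
  set G : (ι → ℝ) → ℝ := fun ψ => pd f x ψ * rho β H lam ψ with hG
  have hGc : ContDiff ℝ (⊤ : ℕ∞) G := (pd_contDiff_top hf x).mul (rho_contDiff hH)
  have hGs : HasCompactSupport G :=
    HasCompactSupport.mul_right (pd_hasCompactSupport hsupp x)
  have hdfx : ∀ φ, DifferentiableAt ℝ (pd f x) φ :=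
    fun φ => (pd_contDiff_top hf x).differentiable (by simp) φ
  have hpt : ∀ φ, Lbar β H x s f φ * rho β H lam φ
      = β⁻¹ * pd G x φ + (s - lam x) * (pd f x φ * rho β H lam φ) := by
    intro φ
    have hpdGx : pd G x φ = pd (pd f x) x φ * rho β H lam φ
        + pd f x φ * ((-β * (pd H x φ - lam x)) * rho β H lam φ) := by
      rw [hG, pd_mul (hdfx φ) (diff_rho hH φ) x, pd_rho hH x φ]
    rw [hpdGx]
    unfold Lbar
    field_simp
    ring
  have iGx : Integrable (fun φ : ι → ℝ => pd G x φ) :=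
    (pd_continuous (hGc.of_le (by simp)) x).integrable_of_hasCompactSupport
      (pd_hasCompactSupport hGs x)
  have ifx := integrable_pd_mul_rho (β := β) (lam := lam) hH hf hsupp x
  calc ∫ φ : ι → ℝ, Lbar β H x s f φ * rho β H lam φ
      = ∫ φ : ι → ℝ, (β⁻¹ * pd G x φ + (s - lam x) * (pd f x φ * rho β H lam φ)) :=
        integral_congr_ae (Filter.Eventually.of_forall hpt)
    _ = β⁻¹ * (∫ φ : ι → ℝ, pd G x φ)
          + (s - lam x) * ∫ φ : ι → ℝ, pd f x φ * rho β H lam φ := by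
        rw [integral_add (iGx.const_mul _) (ifx.const_mul _),
          integral_const_mul, integral_const_mul]
    _ = (s - lam x) * ∫ φ : ι → ℝ, pd f x φ * rho β H lam φ := by
        rw [show (∫ φ : ι → ℝ, pd G x φ) = 0 from
          integral_pd_eq_zero G (hGc.of_le (by simp)) hGs x]
        ring

lemma integrable_Lxy_mul_rho (hH : ContDiff ℝ (⊤ : ℕ∞) H) (hf : ContDiff ℝ (⊤ : ℕ∞) f)
    (hsupp : HasCompactSupport f) (x y : ι) :
    Integrable (fun φ : ι → ℝ => Lxy β H x y f φ * rho β H lam φ) := by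
  have hcont : Continuous fun φ : ι → ℝ => Lxy β H x y f φ * rho β H lam φ := by
    unfold Lxy
    have c1 := pd_continuous (hH.of_le (by simp)) x
    have c2 := pd_continuous (hH.of_le (by simp)) y
    have c3 := pd_continuous (hf.of_le (by simp)) x
    have c4 := pd_continuous (hf.of_le (by simp)) y
    have c5 := pd_continuous ((pd_contDiff_top hf x).of_le (by simp)) x
    have c6 := pd_continuous ((pd_contDiff_top hf x).of_le (by simp)) y
    have c7 := pd_continuous ((pd_contDiff_top hf y).of_le (by simp)) x
    have c8 := pd_continuous ((pd_contDiff_top hf y).of_le (by simp)) y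
    exact ((((c1.sub c2).mul (c3.sub c4)).neg.add
      (continuous_const.mul ((((c5.sub c6).sub c7).add c8)))).mul
      (rho_contDiff hH).continuous)
  have hcs : HasCompactSupport fun φ : ι → ℝ => Lxy β H x y f φ * rho β H lam φ := by
    apply HasCompactSupport.mul_right
    unfold Lxy
    exact hcsAdd
      (hcsNeg (HasCompactSupport.mul_left
        (hcsSub (pd_hasCompactSupport hsupp x) (pd_hasCompactSupport hsupp y))))
      (HasCompactSupport.mul_left (hcsAdd
        (hcsSub (hcsSub (pd_hasCompactSupport (pd_hasCompactSupport hsupp x) x)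
          (pd_hasCompactSupport (pd_hasCompactSupport hsupp x) y))
          (pd_hasCompactSupport (pd_hasCompactSupport hsupp y) x))
        (pd_hasCompactSupport (pd_hasCompactSupport hsupp y) y)))
  exact hcont.integrable_of_hasCompactSupport hcs

lemma integrable_Lbar_mul_rho (hH : ContDiff ℝ (⊤ : ℕ∞) H) (hf : ContDiff ℝ (⊤ : ℕ∞) f)
    (hsupp : HasCompactSupport f) (x : ι) (s : ℝ) :
    Integrable (fun φ : ι → ℝ => Lbar β H x s f φ * rho β H lam φ) := by
  have hcont : Continuous fun φ : ι → ℝ => Lbar β H x s f φ * rho β H lam φ := by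
    unfold Lbar
    have c1 := pd_continuous (hH.of_le (by simp)) x
    have c3 := pd_continuous (hf.of_le (by simp)) x
    have c5 := pd_continuous ((pd_contDiff_top hf x).of_le (by simp)) x
    exact ((((c1.sub continuous_const).mul c3).neg.add
      (continuous_const.mul c5)).mul (rho_contDiff hH).continuous)
  have hcs : HasCompactSupport fun φ : ι → ℝ => Lbar β H x s f φ * rho β H lam φ := by
    apply HasCompactSupport.mul_right
    unfold Lbar
    exact hcsAdd
      (hcsNeg (HasCompactSupport.mul_left (pd_hasCompactSupport hsupp x)))
      (HasCompactSupport.mul_left (pd_hasCompactSupport (pd_hasCompactSupport hsupp x) x))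
  exact hcont.integrable_of_hasCompactSupport hcs

end Rho

/-- If λ* is harmonic in Λ_{n,N} with boundary condition σ on
Δ ⊆ S_{n,N} and μ is the Gibbs measure with density prop. to
exp(−β[H(φ) − ∑_x λ*(x)φ_x]), then ∫ Lf dμ = 0 for every smooth compactly
supported f. -/
theorem gibbs_stationary (k n N : ℕ) (hn : 1 ≤ n) (hN : n < N)
    (β : ℝ) (hβ : 0 < β)
    (Δ : Finset (Pt k)) (hΔS : Δ ⊆ Sshell k n N) (σ lamS : Pt k → ℝ)
    (hlam : HarmBC k n N Δ σ lamS)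
    (H : (↥(Lam k n N) → ℝ) → ℝ) (hH : ContDiff ℝ (⊤ : ℕ∞) H)
    (hZ : Integrable (fun φ : ↥(Lam k n N) → ℝ =>
      Real.exp (-β * (H φ - ∑ x : ↥(Lam k n N), lamS x * φ x))))
    (f : (↥(Lam k n N) → ℝ) → ℝ) (hf : ContDiff ℝ (⊤ : ℕ∞) f)
    (hsupp : HasCompactSupport f) :
    ∫ φ, Gen k n N β Δ σ H f φ
      ∂(volume.withDensity fun φ => ENNReal.ofReal
        ((∫ ψ : ↥(Lam k n N) → ℝ,
            Real.exp (-β * (H ψ - ∑ x : ↥(Lam k n N), lamS x * ψ x)))⁻¹ *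
          Real.exp (-β * (H φ - ∑ x : ↥(Lam k n N), lamS x * φ x)))) = 0 := by
  classical
  set lam' : ↥(Lam k n N) → ℝ := fun x => lamS ↑x with hlam'
  have hβ0 : β ≠ 0 := ne_of_gt hβ
  -- re-express everything through `rho`
  have hrho : (fun φ : ↥(Lam k n N) → ℝ =>
      Real.exp (-β * (H φ - ∑ x : ↥(Lam k n N), lamS ↑x * φ x))) = rho β H lam' := rfl
  show (∫ φ, Gen k n N β Δ σ H f φ
      ∂(volume.withDensity fun φ => ENNReal.ofReal
        ((∫ ψ : ↥(Lam k n N) → ℝ, rho β H lam' ψ)⁻¹ * rho β H lam' φ))) = 0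
  have hZ' : Integrable (rho β H lam') := hZ
  set Z : ℝ := ∫ ψ : ↥(Lam k n N) → ℝ, rho β H lam' ψ with hZdef
  have hZnn : 0 ≤ Z⁻¹ := inv_nonneg.mpr (integral_nonneg fun ψ => (Real.exp_pos _).le)
  have hdens_nn : ∀ φ : ↥(Lam k n N) → ℝ, 0 ≤ Z⁻¹ * rho β H lam' φ := fun φ =>
    mul_nonneg hZnn (Real.exp_pos _).le
  have hdens_meas : Measurable (fun φ : ↥(Lam k n N) → ℝ => Z⁻¹ * rho β H lam' φ) :=
    (measurable_const.mul (rho_contDiff (lam := lam') hH).continuous.measurable)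
  -- step 1: withDensity integral to weighted Lebesgue integral
  have hstep1 : (∫ φ, Gen k n N β Δ σ H f φ
      ∂(volume.withDensity fun φ => ENNReal.ofReal (Z⁻¹ * rho β H lam' φ)))
      = ∫ φ, (Z⁻¹ * rho β H lam' φ) * Gen k n N β Δ σ H f φ := by
    rw [show (fun φ : ↥(Lam k n N) → ℝ => ENNReal.ofReal (Z⁻¹ * rho β H lam' φ))
        = fun φ => (((fun φ : ↥(Lam k n N) → ℝ =>
            (Z⁻¹ * rho β H lam' φ).toNNReal) φ : NNReal) : ENNReal) from rfl]
    rw [integral_withDensity_eq_integral_smul hdens_meas.real_toNNReal]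
    congr 1
    funext φ
    rw [NNReal.smul_def, Real.coe_toNNReal _ (hdens_nn φ), smul_eq_mul]
  rw [hstep1]
  -- step 2: pull out the constant
  have hstep2 : (∫ φ, (Z⁻¹ * rho β H lam' φ) * Gen k n N β Δ σ H f φ)
      = Z⁻¹ * ∫ φ, Gen k n N β Δ σ H f φ * rho β H lam' φ := by
    rw [← integral_const_mul]
    congr 1; funext φ; ring
  rw [hstep2]
  -- step 3: the main cancellation
  have hmain : (∫ φ, Gen k n N β Δ σ H f φ * rho β H lam' φ) = 0 := by
    set I : ↥(Lam k n N) → ℝ :=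
      fun x => ∫ φ : ↥(Lam k n N) → ℝ, pd f x φ * rho β H lam' φ with hI
    have hGenpt : ∀ φ : ↥(Lam k n N) → ℝ, Gen k n N β Δ σ H f φ * rho β H lam' φ
        = (1/2) * (∑ x : ↥(Lam k n N), ∑ y : ↥(Lam k n N),
            (if isNN (x : Pt k) (y : Pt k) then Lxy β H x y f φ * rho β H lam' φ else 0))
          + ∑ x : ↥(Lam k n N), ∑ y ∈ Δ.filter (fun y => isNN (x : Pt k) y),
              (Lbar β H x (σ y) f φ * rho β H lam' φ) := by
      intro φ
      simp only [Gen, add_mul, mul_assoc, Finset.sum_mul, ite_mul, zero_mul]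
    have intIte : ∀ x y : ↥(Lam k n N), Integrable (fun φ : ↥(Lam k n N) → ℝ =>
        if isNN (x : Pt k) (y : Pt k) then Lxy β H x y f φ * rho β H lam' φ else 0) := by
      intro x y
      by_cases h : isNN (x : Pt k) (y : Pt k)
      · simp only [if_pos h]; exact integrable_Lxy_mul_rho hH hf hsupp x y
      · simp only [if_neg h]; exact integrable_zero _ _ _
    have intInnerA : ∀ x : ↥(Lam k n N), Integrable (fun φ : ↥(Lam k n N) → ℝ =>
        ∑ y : ↥(Lam k n N),
          (if isNN (x : Pt k) (y : Pt k) then Lxy β H x y f φ * rho β H lam' φ else 0)) :=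
      fun x => integrable_finset_sum _ fun y _ => intIte x y
    have intA : Integrable (fun φ : ↥(Lam k n N) → ℝ =>
        ∑ x : ↥(Lam k n N), ∑ y : ↥(Lam k n N),
          (if isNN (x : Pt k) (y : Pt k) then Lxy β H x y f φ * rho β H lam' φ else 0)) :=
      integrable_finset_sum _ fun x _ => intInnerA x
    have intInnerB : ∀ x : ↥(Lam k n N), Integrable (fun φ : ↥(Lam k n N) → ℝ =>
        ∑ y ∈ Δ.filter (fun y => isNN (x : Pt k) y),
          Lbar β H x (σ y) f φ * rho β H lam' φ) :=
      fun x => integrable_finset_sum _ fun y _ => integrable_Lbar_mul_rho hH hf hsupp x (σ y)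
    have intB : Integrable (fun φ : ↥(Lam k n N) → ℝ =>
        ∑ x : ↥(Lam k n N), ∑ y ∈ Δ.filter (fun y => isNN (x : Pt k) y),
          Lbar β H x (σ y) f φ * rho β H lam' φ) :=
      integrable_finset_sum _ fun x _ => intInnerB x
    calc ∫ φ, Gen k n N β Δ σ H f φ * rho β H lam' φ
        = ∫ φ : ↥(Lam k n N) → ℝ, ((1/2) * (∑ x : ↥(Lam k n N), ∑ y : ↥(Lam k n N),
              (if isNN (x : Pt k) (y : Pt k) then Lxy β H x y f φ * rho β H lam' φ else 0))
            + ∑ x : ↥(Lam k n N), ∑ y ∈ Δ.filter (fun y => isNN (x : Pt k) y),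
                (Lbar β H x (σ y) f φ * rho β H lam' φ)) :=
          integral_congr_ae (Filter.Eventually.of_forall hGenpt)
      _ = (1/2) * (∑ x : ↥(Lam k n N), ∑ y : ↥(Lam k n N),
              (if isNN (x : Pt k) (y : Pt k)
                then -(lam' x - lam' y) * (I x - I y) else 0))
            + ∑ x : ↥(Lam k n N), ∑ y ∈ Δ.filter (fun y => isNN (x : Pt k) y),
                ((σ y - lam' x) * I x) := by
          rw [integral_add (intA.const_mul _) intB, integral_const_mul,
            integral_finset_sum _ fun x _ => intInnerA x,
            integral_finset_sum _ fun x _ => intInnerB x]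
          congr 1
          · congr 1
            refine Finset.sum_congr rfl fun x _ => ?_
            rw [integral_finset_sum _ fun y _ => intIte x y]
            refine Finset.sum_congr rfl fun y _ => ?_
            by_cases h : isNN (x : Pt k) (y : Pt k)
            · simp only [if_pos h]
              exact bond_integral hβ0 hH hf hsupp x y
            · simp only [if_neg h, integral_zero]
          · refine Finset.sum_congr rfl fun x _ => ?_
            rw [integral_finset_sum _ fun y _ => integrable_Lbar_mul_rho hH hf hsupp x (σ y)]
            exact Finset.sum_congr rfl fun y _ =>
              boundary_integral hβ0 hH hf hsupp x (σ y)
      _ = 0 := by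
          -- symmetrization and harmonicity
          have hsymNN : ∀ x y : Pt k, isNN x y ↔ isNN y x := by
            intro x y
            unfold isNN
            rw [abs_sub_comm]
            have : (∑ i, |x.2 i - y.2 i|) = ∑ i, |y.2 i - x.2 i| :=
              Finset.sum_congr rfl fun i _ => abs_sub_comm _ _
            rw [this]
          have hA : (∑ x : ↥(Lam k n N), ∑ y : ↥(Lam k n N),
              (if isNN (x : Pt k) (y : Pt k)
                then -(lam' x - lam' y) * (I x - I y) else 0))
              = ∑ x : ↥(Lam k n N), (-2) * (I x * ∑ y : ↥(Lam k n N),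
                  (if isNN (x : Pt k) (y : Pt k) then lam' x - lam' y else 0)) := by
            have e1 : ∀ x y : ↥(Lam k n N),
                (if isNN (x : Pt k) (y : Pt k)
                  then -(lam' x - lam' y) * (I x - I y) else 0)
                = (if isNN (x : Pt k) (y : Pt k) then -(lam' x - lam' y) * I x else 0)
                  + (if isNN (x : Pt k) (y : Pt k) then (lam' x - lam' y) * I y else 0) := by
              intro x y
              by_cases h : isNN (x : Pt k) (y : Pt k)
              · rw [if_pos h, if_pos h, if_pos h]; ring
              · rw [if_neg h, if_neg h, if_neg h, add_zero]
            simp_rw [e1, Finset.sum_add_distrib]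
            have e2 : (∑ x : ↥(Lam k n N), ∑ y : ↥(Lam k n N),
                (if isNN (x : Pt k) (y : Pt k) then (lam' x - lam' y) * I y else 0))
                = ∑ x : ↥(Lam k n N), ∑ y : ↥(Lam k n N),
                  (if isNN (x : Pt k) (y : Pt k) then (lam' y - lam' x) * I x else 0) := by
              rw [Finset.sum_comm]
              refine Finset.sum_congr rfl fun x _ => Finset.sum_congr rfl fun y _ => ?_
              exact if_congr (hsymNN _ _) rfl rfl
            rw [e2, ← Finset.sum_add_distrib]
            refine Finset.sum_congr rfl fun x _ => ?_
            rw [← Finset.sum_add_distrib, Finset.mul_sum, Finset.mul_sum]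
            refine Finset.sum_congr rfl fun y _ => ?_
            by_cases h : isNN (x : Pt k) (y : Pt k)
            · rw [if_pos h, if_pos h, if_pos h]; ring
            · rw [if_neg h, if_neg h, if_neg h, add_zero, mul_zero, mul_zero]
          rw [hA]
          have hB : ∀ x : ↥(Lam k n N),
              (∑ y ∈ Δ.filter (fun y => isNN (x : Pt k) y), ((σ y - lam' x) * I x))
              = -(I x * ∑ y ∈ Δ.filter (fun y => isNN (x : Pt k) y), (lam' x - σ y)) := by
            intro x
            rw [Finset.mul_sum, ← Finset.sum_neg_distrib]
            exact Finset.sum_congr rfl fun y _ => by ring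
          simp_rw [hB]
          rw [Finset.mul_sum, ← Finset.sum_add_distrib]
          refine Finset.sum_eq_zero fun x _ => ?_
          have hxmem : (x : Pt k) ∈ Lam k n N := x.2
          have hharm := hlam.2 (x : Pt k) hxmem
          have hΛeq : (∑ y : ↥(Lam k n N),
              (if isNN (x : Pt k) (y : Pt k) then lam' x - lam' y else 0))
              = ∑ y ∈ (Lam k n N).filter (fun y => isNN (x : Pt k) y),
                (lamS (x : Pt k) - lamS y) := by
            rw [Finset.sum_filter]
            exact Finset.sum_coe_sort (Lam k n N)
              (fun y => if isNN (x : Pt k) y then lamS (x : Pt k) - lamS y else 0)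
          rw [hΛeq]
          have : (∑ y ∈ (Lam k n N).filter (fun y => isNN (x : Pt k) y),
              (lamS (x : Pt k) - lamS y))
              = - ∑ y ∈ Δ.filter (fun y => isNN (x : Pt k) y), (lamS (x : Pt k) - σ y) := by
            linarith [hharm]
          rw [this]
          simp only [hlam']
          ring
  rw [hmain, mul_zero]
end

section
/- Let Λ be a finite nonempty set, β > 0, λ : Λ → ℝ, and H : ℝ^Λ → ℝ a C¹ function such that H(φ) ≥ a‖φ‖₂² − b for some a > 0, b ∈ ℝ, and such that each partial derivative ∂H/∂φ_x has at most polynomial growth. Let μ be the probability measure on ℝ^Λ with density proportional to exp(−β[H(φ) − ∑_{x∈Λ} λ(x)φ_x]). Then for every x ∈ Λ, ∫ (∂H/∂φ_x)(φ) μ(dφ) = λ(x); consequently for every x, y ∈ Λ the mean instantaneous current satisfies ∫ J_{x→y}(φ) μ(dφ) = λ(x) − λ(y). -/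
/-!
With the Gibbs weight `W φ = exp (-β (H φ - ∑ z, λ z φ z))` one has
`∂W/∂φ_x = -β (∂H/∂φ_x - λ x) W`. Superstability bounds `W` by a Gaussian, which absorbs the
polynomial growth of `∂H/∂φ_x`, so `∂W/∂φ_x` is integrable; the integral of an integrable
partial derivative over all of `ℝ^Λ` vanishes (integration by parts against `1`), whence
`∫ ∂H/∂φ_x · W = λ x ∫ W`. Normalising by `∫ W > 0` gives the mean value, and the current
statement follows by linearity.
-/

open MeasureTheory

open Real

section Gaussian

variable {ι : Type*} [Fintype ι]

theorem integrable_exp_neg_mul_sum_sq_add {c : ℝ} (hc : 0 < c) (d : ι → ℝ) :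
    Integrable fun v : ι → ℝ => exp (-c * ∑ i, v i ^ 2 + ∑ i, d i * v i) := by
  have h := (GaussianFourier.integrable_cexp_neg_mul_sum_add (b := (c : ℂ)) (by simpa using hc)
    fun i => (d i : ℂ)).norm
  refine h.congr (ae_of_all _ fun v => ?_)
  simp only [Complex.norm_exp]
  norm_cast

theorem pi_norm_sq_le_sum_sq (v : ι → ℝ) : ‖v‖ ^ 2 ≤ ∑ i, v i ^ 2 := by
  have h : ‖v‖ ≤ √(∑ i, v i ^ 2) := by
    refine (pi_norm_le_iff_of_nonneg (sqrt_nonneg _)).mpr fun i => ?_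
    rw [norm_eq_abs, ← sqrt_sq_eq_abs]
    exact sqrt_le_sqrt (Finset.single_le_sum (fun j _ => sq_nonneg (v j)) (Finset.mem_univ i))
  calc ‖v‖ ^ 2 ≤ √(∑ i, v i ^ 2) ^ 2 := by gcongr
    _ = ∑ i, v i ^ 2 := sq_sqrt (Finset.sum_nonneg fun i _ => sq_nonneg (v i))

theorem one_add_pow_le_mul_exp_sq {s r : ℝ} (hs : 0 < s) (hr : 0 ≤ r) (q : ℕ) :
    (1 + r) ^ q ≤ q.factorial / s ^ q * exp (2 * s * (1 + r ^ 2)) := by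
  have h1 : 1 ≤ 1 + r := by linarith
  have hexp := pow_div_factorial_le_exp (x := s * (1 + r) ^ 2) (by positivity) q
  calc (1 + r) ^ q ≤ ((1 + r) ^ 2) ^ q := by
        rw [← pow_mul]; exact pow_le_pow_right₀ h1 (by omega)
    _ = q.factorial / s ^ q * ((s * (1 + r) ^ 2) ^ q / q.factorial) := by
        rw [mul_pow]; field_simp
    _ ≤ q.factorial / s ^ q * exp (s * (1 + r) ^ 2) := by gcongr
    _ ≤ q.factorial / s ^ q * exp (2 * s * (1 + r ^ 2)) := by
        gcongr q.factorial / s ^ q * exp ?_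
        nlinarith [sq_nonneg (1 - r)]

theorem integrable_one_add_norm_pow_mul_exp_neg_mul_sum_sq_add {c : ℝ} (hc : 0 < c)
    (d : ι → ℝ) (q : ℕ) :
    Integrable fun v : ι → ℝ =>
      (1 + ‖v‖) ^ q * exp (-c * ∑ i, v i ^ 2 + ∑ i, d i * v i) := by
  set M : ℝ := q.factorial / (c / 4) ^ q * exp (c / 2)
  refine ((integrable_exp_neg_mul_sum_sq_add (half_pos hc) d).const_mul M).mono'
    (by fun_prop) (ae_of_all _ fun v => ?_)
  have hpoly := one_add_pow_le_mul_exp_sq (s := c / 4) (by positivity) (norm_nonneg v) q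
  have hsq := pi_norm_sq_le_sum_sq v
  rw [norm_of_nonneg (by positivity)]
  calc (1 + ‖v‖) ^ q * exp (-c * ∑ i, v i ^ 2 + ∑ i, d i * v i)
      ≤ q.factorial / (c / 4) ^ q * exp (2 * (c / 4) * (1 + ‖v‖ ^ 2)) *
          exp (-c * ∑ i, v i ^ 2 + ∑ i, d i * v i) := by gcongr
    _ = M * exp (c / 2 * (‖v‖ ^ 2 - ∑ i, v i ^ 2) +
          (-(c / 2) * ∑ i, v i ^ 2 + ∑ i, d i * v i)) := by
        simp only [M, mul_assoc, ← exp_add]; ring_nf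
    _ ≤ M * exp (-(c / 2) * ∑ i, v i ^ 2 + ∑ i, d i * v i) := by
        gcongr M * exp ?_
        nlinarith

end Gaussian

theorem integral_fderiv_apply_eq_zero {E : Type*} [NormedAddCommGroup E] [NormedSpace ℝ E]
    [FiniteDimensional ℝ E] [MeasurableSpace E] [BorelSpace E] {μ : Measure E}
    [μ.IsAddHaarMeasure] {f : E → ℝ} {v : E} (hf : Differentiable ℝ f) (hfi : Integrable f μ)
    (hf'i : Integrable (fun x => fderiv ℝ f x v) μ) :
    ∫ x, fderiv ℝ f x v ∂μ = 0 := by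
  have h := integral_mul_fderiv_eq_neg_fderiv_mul_of_integrable (μ := μ) (f := fun _ => (1 : ℝ))
    (g := f) (v := v) (by simp) (by simpa using hf'i) (by simpa using hfi)
    (fun _ _ => differentiableAt_const _) (fun x _ => hf x)
  simpa using h

section Gibbs

variable {Λ : Type*} [Fintype Λ]

noncomputable def gibbsWeight (β : ℝ) (H : (Λ → ℝ) → ℝ) (lam φ : Λ → ℝ) : ℝ :=
  exp (-β * (H φ - ∑ z, lam z * φ z))

noncomputable def gibbsMeasure (β : ℝ) (H : (Λ → ℝ) → ℝ) (lam : Λ → ℝ) : Measure (Λ → ℝ) :=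
  volume.withDensity fun φ =>
    ENNReal.ofReal ((∫ ψ, gibbsWeight β H lam ψ)⁻¹ * gibbsWeight β H lam φ)

variable {β a b : ℝ} {H : (Λ → ℝ) → ℝ} {lam : Λ → ℝ}

theorem measurable_gibbsWeight (hH : Measurable H) : Measurable (gibbsWeight β H lam) := by
  unfold gibbsWeight; fun_prop

theorem gibbsWeight_le (hβ : 0 ≤ β) (hlow : ∀ φ : Λ → ℝ, a * (∑ x, (φ x) ^ 2) - b ≤ H φ)
    (φ : Λ → ℝ) :
    gibbsWeight β H lam φ ≤
      exp (β * b) * exp (-(β * a) * ∑ z, φ z ^ 2 + ∑ z, β * lam z * φ z) := by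
  rw [gibbsWeight, ← exp_add, exp_le_exp]
  have hβlow := mul_le_mul_of_nonneg_left (hlow φ) hβ
  simp only [mul_assoc, ← Finset.mul_sum]
  nlinarith

theorem integrable_mul_gibbsWeight (hβ : 0 < β) (ha : 0 < a) (hH : Measurable H)
    (hlow : ∀ φ : Λ → ℝ, a * (∑ x, (φ x) ^ 2) - b ≤ H φ) {G : (Λ → ℝ) → ℝ}
    (hGm : AEStronglyMeasurable G) {C : ℝ} {p : ℕ} (hG : ∀ φ, |G φ| ≤ C * (1 + ‖φ‖) ^ p) :
    Integrable fun φ => G φ * gibbsWeight β H lam φ := by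
  refine ((integrable_one_add_norm_pow_mul_exp_neg_mul_sum_sq_add (mul_pos hβ ha)
    (fun z => β * lam z) p).const_mul (C * exp (β * b))).mono'
    (hGm.mul (measurable_gibbsWeight hH).aestronglyMeasurable) (ae_of_all _ fun φ => ?_)
  have hW : 0 ≤ gibbsWeight β H lam φ := (exp_pos _).le
  have hC : 0 ≤ C := nonneg_of_mul_nonneg_left ((abs_nonneg _).trans (hG φ)) (by positivity)
  rw [norm_mul, norm_eq_abs, norm_of_nonneg hW]
  calc |G φ| * gibbsWeight β H lam φ
      ≤ C * (1 + ‖φ‖) ^ p *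
          (exp (β * b) * exp (-(β * a) * ∑ z, φ z ^ 2 + ∑ z, β * lam z * φ z)) := by
        gcongr
        · exact hG φ
        · exact gibbsWeight_le hβ.le hlow φ
    _ = _ := by ring

theorem integrable_gibbsWeight (hβ : 0 < β) (ha : 0 < a) (hH : Measurable H)
    (hlow : ∀ φ : Λ → ℝ, a * (∑ x, (φ x) ^ 2) - b ≤ H φ) :
    Integrable (gibbsWeight β H lam) := by
  simpa using integrable_mul_gibbsWeight (lam := lam) hβ ha hH hlow (G := 1)
    aestronglyMeasurable_const (C := 1) (p := 0) (by simp)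

theorem integral_gibbsWeight_pos (hβ : 0 < β) (ha : 0 < a) (hH : Measurable H)
    (hlow : ∀ φ : Λ → ℝ, a * (∑ x, (φ x) ^ 2) - b ≤ H φ) :
    0 < ∫ φ, gibbsWeight β H lam φ :=
  integral_exp_pos (integrable_gibbsWeight hβ ha hH hlow)

theorem integral_gibbsMeasure (hH : Measurable H) (g : (Λ → ℝ) → ℝ) :
    ∫ φ, g φ ∂gibbsMeasure β H lam =
      (∫ ψ, gibbsWeight β H lam ψ)⁻¹ * ∫ φ, g φ * gibbsWeight β H lam φ := by
  have hW : ∀ φ, 0 ≤ gibbsWeight β H lam φ := fun φ => (exp_pos _).le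
  have hZ : 0 ≤ (∫ ψ, gibbsWeight β H lam ψ)⁻¹ := inv_nonneg.mpr (integral_nonneg hW)
  rw [gibbsMeasure, integral_withDensity_eq_integral_toReal_smul
      ((measurable_gibbsWeight hH).const_mul _).ennreal_ofReal
      (ae_of_all _ fun _ => ENNReal.ofReal_lt_top),
    ← integral_const_mul]
  congr 1 with φ
  rw [ENNReal.toReal_ofReal (mul_nonneg hZ (hW φ)), smul_eq_mul]
  ring

theorem differentiable_gibbsWeight (hH : Differentiable ℝ H) :
    Differentiable ℝ (gibbsWeight β H lam) :=
  ((hH.sub (by fun_prop)).const_mul (-β)).exp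

variable [DecidableEq Λ]

theorem pd_gibbsWeight (hH : Differentiable ℝ H) (x : Λ) (φ : Λ → ℝ) :
    pd (gibbsWeight β H lam) x φ = -β * (pd H x φ - lam x) * gibbsWeight β H lam φ := by
  have hlin : HasFDerivAt (fun ψ : Λ → ℝ => ∑ z, lam z * ψ z)
      (∑ z, lam z • ContinuousLinearMap.proj z) φ :=
    HasFDerivAt.fun_sum fun z _ => (hasFDerivAt_apply (𝕜 := ℝ) z φ).const_mul (lam z)
  have h : HasFDerivAt (gibbsWeight β H lam) (gibbsWeight β H lam φ •
      -β • (fderiv ℝ H φ - ∑ z, lam z • ContinuousLinearMap.proj z)) φ :=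
    (((hH φ).hasFDerivAt.sub hlin).const_mul (-β)).exp
  rw [pd, h.fderiv]
  simp only [pd, smul_apply, sub_apply, sum_apply, ContinuousLinearMap.proj_apply,
    Pi.single_apply, smul_eq_mul, mul_ite, mul_one, mul_zero, Finset.sum_ite_eq',
    Finset.mem_univ, if_true]
  ring

theorem integral_pd_mul_gibbsWeight (hβ : 0 < β) (ha : 0 < a) (hH : ContDiff ℝ 1 H)
    (hlow : ∀ φ : Λ → ℝ, a * (∑ x, (φ x) ^ 2) - b ≤ H φ) {x : Λ} {C : ℝ} {p : ℕ}
    (hgrow : ∀ φ, |pd H x φ| ≤ C * (1 + ‖φ‖) ^ p) :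
    ∫ φ, pd H x φ * gibbsWeight β H lam φ = lam x * ∫ φ, gibbsWeight β H lam φ := by
  have hHd : Differentiable ℝ H := hH.differentiable one_ne_zero
  have hWi := integrable_gibbsWeight (lam := lam) hβ ha hH.continuous.measurable hlow
  have hpdWi : Integrable fun φ => pd H x φ * gibbsWeight β H lam φ :=
    integrable_mul_gibbsWeight hβ ha hH.continuous.measurable hlow
      (measurable_fderiv_apply_const ℝ H _).aestronglyMeasurable hgrow
  have hibp : ∫ φ, pd (gibbsWeight β H lam) x φ = 0 :=
    integral_fderiv_apply_eq_zero (differentiable_gibbsWeight hHd) hWi (by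
      change Integrable fun φ => pd (gibbsWeight β H lam) x φ
      simp_rw [pd_gibbsWeight hHd, mul_assoc, sub_mul]
      exact (hpdWi.sub (hWi.const_mul (lam x))).const_mul (-β))
  simp_rw [pd_gibbsWeight hHd, mul_assoc, sub_mul] at hibp
  rw [integral_const_mul, integral_sub hpdWi (hWi.const_mul _), integral_const_mul] at hibp
  have hcentred := (mul_eq_zero.mp hibp).resolve_left (neg_ne_zero.mpr hβ.ne')
  linarith

end Gibbs

theorem mean_current_eq_chemical_potential_general
    (Λ : Type*) [Fintype Λ] [DecidableEq Λ]
    (β a b : ℝ) (hβ : 0 < β) (ha : 0 < a) (lam : Λ → ℝ)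
    (H : (Λ → ℝ) → ℝ) (hH : ContDiff ℝ 1 H)
    (hlow : ∀ φ : Λ → ℝ, a * (∑ x, (φ x) ^ 2) - b ≤ H φ)
    (hgrow : ∀ x : Λ, ∃ (C : ℝ) (p : ℕ), ∀ φ : Λ → ℝ,
      |pd H x φ| ≤ C * (1 + ‖φ‖) ^ p) :
    (∀ x : Λ,
      ∫ φ : Λ → ℝ, pd H x φ
        ∂(volume.withDensity fun φ => ENNReal.ofReal
          ((∫ ψ : Λ → ℝ, Real.exp (-β * (H ψ - ∑ z, lam z * ψ z)))⁻¹ *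
            Real.exp (-β * (H φ - ∑ z, lam z * φ z)))) = lam x) ∧
    (∀ x y : Λ,
      ∫ φ : Λ → ℝ, (pd H x φ - pd H y φ)
        ∂(volume.withDensity fun φ => ENNReal.ofReal
          ((∫ ψ : Λ → ℝ, Real.exp (-β * (H ψ - ∑ z, lam z * ψ z)))⁻¹ *
            Real.exp (-β * (H φ - ∑ z, lam z * φ z)))) = lam x - lam y) := by
  have hHm : Measurable H := hH.continuous.measurable
  have hZ := (integral_gibbsWeight_pos (lam := lam) hβ ha hHm hlow).ne'
  choose C p hC using hgrow
  have hmean : ∀ x, ∫ φ, pd H x φ * gibbsWeight β H lam φ = lam x * ∫ φ, gibbsWeight β H lam φ :=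
    fun x => integral_pd_mul_gibbsWeight hβ ha hH hlow (hC x)
  have hint : ∀ x, Integrable fun φ => pd H x φ * gibbsWeight β H lam φ := fun x =>
    integrable_mul_gibbsWeight hβ ha hHm hlow
      (measurable_fderiv_apply_const ℝ H _).aestronglyMeasurable (hC x)
  refine ⟨fun x => ?_, fun x y => ?_⟩
  · change ∫ φ, pd H x φ ∂gibbsMeasure β H lam = lam x
    rw [integral_gibbsMeasure hHm, hmean]
    field_simp
  · change ∫ φ, (pd H x φ - pd H y φ) ∂gibbsMeasure β H lam = lam x - lam y
    rw [integral_gibbsMeasure hHm]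
    simp_rw [sub_mul]
    rw [integral_sub (hint x) (hint y), hmean, hmean]
    field_simp

/-- For a C¹ superstable Hamiltonian with polynomially growing
gradient, under the Gibbs measure with chemical potential λ one has
∫ ∂H/∂φ_x dμ = λ(x); hence the mean instantaneous current
J_{x→y} = ∂H/∂φ_x − ∂H/∂φ_y has average λ(x) − λ(y). -/
theorem mean_current_eq_chemical_potential
    (Λ : Type*) [Fintype Λ] [DecidableEq Λ] [Nonempty Λ]
    (β a b : ℝ) (hβ : 0 < β) (ha : 0 < a) (lam : Λ → ℝ)
    (H : (Λ → ℝ) → ℝ) (hH : ContDiff ℝ 1 H)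
    (hlow : ∀ φ : Λ → ℝ, a * (∑ x, (φ x) ^ 2) - b ≤ H φ)
    (hgrow : ∀ x : Λ, ∃ (C : ℝ) (p : ℕ), ∀ φ : Λ → ℝ,
      |pd H x φ| ≤ C * (1 + ‖φ‖) ^ p) :
    (∀ x : Λ,
      ∫ φ : Λ → ℝ, pd H x φ
        ∂(volume.withDensity fun φ => ENNReal.ofReal
          ((∫ ψ : Λ → ℝ, Real.exp (-β * (H ψ - ∑ z, lam z * ψ z)))⁻¹ *
            Real.exp (-β * (H φ - ∑ z, lam z * φ z)))) = lam x) ∧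
    (∀ x y : Λ,
      ∫ φ : Λ → ℝ, (pd H x φ - pd H y φ)
        ∂(volume.withDensity fun φ => ENNReal.ofReal
          ((∫ ψ : Λ → ℝ, Real.exp (-β * (H ψ - ∑ z, lam z * ψ z)))⁻¹ *
            Real.exp (-β * (H φ - ∑ z, lam z * φ z)))) = lam x - lam y) :=
  mean_current_eq_chemical_potential_general Λ β a b hβ ha lam H hH hlow hgrow
end

section
/- Let (X, 𝔛, m) be a measure space and let ν₁, ν₂ be probability measures on X with densities G₁ ≥ 0 and G₂ ≥ 0 with respect to m. Suppose A ∈ 𝔛 and k > 0 are such that G₁ = k·G₂ m-almost everywhere on A. Then ∫ |G₁ − G₂| dm ≤ 2(ν₁(X \ A) + ν₂(X \ A)). -/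
/-!
On `A` the integrand is `|c - 1| G₂`, so the integral over `A` is
`|c - 1| ν₂ A = |ν₁ A - ν₂ A| = |ν₂ Aᶜ - ν₁ Aᶜ| ≤ ν₁ Aᶜ + ν₂ Aᶜ`, while off `A`
the pointwise bound `|G₁ - G₂| ≤ G₁ + G₂` gives the same bound.
-/

open MeasureTheory ENNReal

section

variable {X : Type*} [MeasurableSpace X]

theorem setLIntegral_eq_const_mul_of_ae_eq {μ : Measure X} {A : Set X} {f g : X → ℝ≥0∞}
    {r : ℝ≥0∞} (hA : MeasurableSet A) (hr : r ≠ ∞) (h : ∀ᵐ x ∂μ, x ∈ A → f x = r * g x) :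
    ∫⁻ x in A, f x ∂μ = r * ∫⁻ x in A, g x ∂μ := by
  rw [← lintegral_const_mul' r g hr]
  exact setLIntegral_congr_fun_ae hA h

theorem lintegral_ofReal_abs_sub_le {μ : Measure X} {f g : X → ℝ} (hf : Measurable f)
    (hf₀ : ∀ x, 0 ≤ f x) (hg₀ : ∀ x, 0 ≤ g x) :
    ∫⁻ x, ENNReal.ofReal |f x - g x| ∂μ
      ≤ ∫⁻ x, ENNReal.ofReal (f x) ∂μ + ∫⁻ x, ENNReal.ofReal (g x) ∂μ := by
  rw [← lintegral_add_left hf.ennreal_ofReal]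
  refine lintegral_mono fun x => ?_
  rw [← ENNReal.ofReal_add (hf₀ x) (hg₀ x)]
  refine ENNReal.ofReal_le_ofReal ?_
  rw [abs_le]
  constructor <;> linarith [hf₀ x, hg₀ x]

theorem ofReal_abs_sub_one_mul_le_measure_compl_add (ν₁ ν₂ : Measure X)
    [IsProbabilityMeasure ν₁] [IsProbabilityMeasure ν₂] {A : Set X} (hA : MeasurableSet A)
    {c : ℝ} (hc : 0 ≤ c) (h : ν₁ A = ENNReal.ofReal c * ν₂ A) :
    ENNReal.ofReal |c - 1| * ν₂ A ≤ ν₁ Aᶜ + ν₂ Aᶜ := by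
  have hreal : ν₁.real A = c * ν₂.real A := by
    rw [measureReal_def, h, toReal_mul, toReal_ofReal hc, measureReal_def]
  rw [← ofReal_measureReal, ← ofReal_measureReal, ← ofReal_measureReal,
    ← ENNReal.ofReal_mul (abs_nonneg _),
    ← ENNReal.ofReal_add measureReal_nonneg measureReal_nonneg,
    probReal_compl_eq_one_sub hA, probReal_compl_eq_one_sub hA]
  refine ENNReal.ofReal_le_ofReal ?_
  have hν₁ : ν₁.real A ≤ 1 := measureReal_le_one
  have hν₂ : ν₂.real A ≤ 1 := measureReal_le_one
  have hsub : |c - 1| * ν₂.real A = |ν₁.real A - ν₂.real A| := by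
    rw [hreal, ← sub_one_mul, abs_mul, abs_of_nonneg measureReal_nonneg]
  rw [hsub, abs_le]
  constructor <;> linarith [measureReal_nonneg (μ := ν₁) (s := A),
    measureReal_nonneg (μ := ν₂) (s := A)]

end

theorem L1_dist_le_of_proportional_on_general
    {X : Type*} [MeasurableSpace X] (m : Measure X)
    (G₁ G₂ : X → ℝ) (hG₁m : Measurable G₁)
    (hG₁ : ∀ x, 0 ≤ G₁ x) (hG₂ : ∀ x, 0 ≤ G₂ x)
    (ν₁ ν₂ : Measure X)
    (hν₁ : ν₁ = m.withDensity fun x => ENNReal.ofReal (G₁ x))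
    (hν₂ : ν₂ = m.withDensity fun x => ENNReal.ofReal (G₂ x))
    [IsProbabilityMeasure ν₁] [IsProbabilityMeasure ν₂]
    (A : Set X) (hA : MeasurableSet A) (c : ℝ) (hc : 0 < c)
    (hprop : ∀ᵐ x ∂m, x ∈ A → G₁ x = c * G₂ x) :
    ∫⁻ x, ENNReal.ofReal |G₁ x - G₂ x| ∂m ≤ 2 * (ν₁ Aᶜ + ν₂ Aᶜ) := by
  have hν₂A : ν₂ A = ∫⁻ x in A, ENNReal.ofReal (G₂ x) ∂m := by
    rw [hν₂, withDensity_apply _ hA]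
  have hratio : ν₁ A = ENNReal.ofReal c * ν₂ A := by
    rw [hν₂A, hν₁, withDensity_apply _ hA]
    refine setLIntegral_eq_const_mul_of_ae_eq hA ofReal_ne_top ?_
    filter_upwards [hprop] with x hx hxA
    rw [hx hxA, ENNReal.ofReal_mul hc.le]
  have hOnA : ∫⁻ x in A, ENNReal.ofReal |G₁ x - G₂ x| ∂m = ENNReal.ofReal |c - 1| * ν₂ A := by
    rw [hν₂A]
    refine setLIntegral_eq_const_mul_of_ae_eq hA ofReal_ne_top ?_
    filter_upwards [hprop] with x hx hxA
    rw [hx hxA, ← sub_one_mul, abs_mul, abs_of_nonneg (hG₂ x), ENNReal.ofReal_mul (abs_nonneg _)]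
  have hOnAc : ∫⁻ x in Aᶜ, ENNReal.ofReal |G₁ x - G₂ x| ∂m ≤ ν₁ Aᶜ + ν₂ Aᶜ := by
    rw [hν₁, hν₂, withDensity_apply _ hA.compl, withDensity_apply _ hA.compl]
    exact lintegral_ofReal_abs_sub_le hG₁m hG₁ hG₂
  calc ∫⁻ x, ENNReal.ofReal |G₁ x - G₂ x| ∂m
      = ENNReal.ofReal |c - 1| * ν₂ A + ∫⁻ x in Aᶜ, ENNReal.ofReal |G₁ x - G₂ x| ∂m := by
        rw [← lintegral_add_compl _ hA, hOnA]
    _ ≤ (ν₁ Aᶜ + ν₂ Aᶜ) + (ν₁ Aᶜ + ν₂ Aᶜ) :=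
        add_le_add (ofReal_abs_sub_one_mul_le_measure_compl_add ν₁ ν₂ hA hc.le hratio) hOnAc
    _ = 2 * (ν₁ Aᶜ + ν₂ Aᶜ) := (two_mul _).symm

/-- If two probability densities G₁, G₂ w.r.t. m are
proportional (G₁ = k·G₂, k > 0) a.e. on a set A, then their L¹ distance is at
most 2(ν₁(Aᶜ) + ν₂(Aᶜ)). -/
theorem L1_dist_le_of_proportional_on
    {X : Type*} [MeasurableSpace X] (m : Measure X)
    (G₁ G₂ : X → ℝ) (hG₁m : Measurable G₁) (hG₂m : Measurable G₂)
    (hG₁ : ∀ x, 0 ≤ G₁ x) (hG₂ : ∀ x, 0 ≤ G₂ x)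
    (ν₁ ν₂ : Measure X)
    (hν₁ : ν₁ = m.withDensity fun x => ENNReal.ofReal (G₁ x))
    (hν₂ : ν₂ = m.withDensity fun x => ENNReal.ofReal (G₂ x))
    [IsProbabilityMeasure ν₁] [IsProbabilityMeasure ν₂]
    (A : Set X) (hA : MeasurableSet A) (c : ℝ) (hc : 0 < c)
    (hprop : ∀ᵐ x ∂m, x ∈ A → G₁ x = c * G₂ x) :
    ∫⁻ x, ENNReal.ofReal |G₁ x - G₂ x| ∂m ≤ 2 * (ν₁ Aᶜ + ν₂ Aᶜ) :=
  L1_dist_le_of_proportional_on_general m G₁ G₂ hG₁m hG₁ hG₂ ν₁ ν₂ hν₁ hν₂ A hA c hc hprop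
end

section
/- Let Λ be a finite nonempty set, a > 0, β > 0, c₀, c₁ ∈ ℝ, and λ : Λ → ℝ. Let H : ℝ^Λ → ℝ be measurable of the form H(φ) = a∑_{x∈Λ} φ_x² + H'(φ), where H'(φ) ≥ c₀ for all φ and H'(φ) ≤ c₁ whenever max_{x∈Λ} |φ_x| ≤ 1. Then Z = ∫ exp(−β[H(φ) − ∑_{x∈Λ} λ(x)φ_x]) dφ is finite and strictly positive, and there exists a constant c (depending only on a, β, c₀, c₁, λ and |Λ|) such that the probability density G(φ) = Z^{−1} exp(−β[H(φ) − ∑_{x∈Λ} λ(x)φ_x]) satisfies G(φ) ≤ c·exp(−(βa/2)‖φ‖₂²) for all φ ∈ ℝ^Λ. -/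
open MeasureTheory

/- The quadratic term dominates everything else: by Young's inequality
⟨λ, φ⟩ ≤ (a/2)‖φ‖₂² + ‖λ‖₂²/(2a), so the lower bound H' ≥ c₀ gives the pointwise bound
exp(−β[H(φ) − ⟨λ, φ⟩]) ≤ C·exp(−(βa/2)‖φ‖₂²) with C = exp(β(‖λ‖₂²/(2a) − c₀)).
The Gaussian on the right is integrable, so Z is finite; Z > 0 because the integrand
is everywhere positive, and the density bound holds with c = C/Z. -/

theorem integrable_exp_neg_mul_sum_sq (ι : Type*) [Fintype ι] {b : ℝ} (hb : 0 < b) :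
    Integrable (fun φ : ι → ℝ => Real.exp (-b * ∑ x, (φ x) ^ 2)) := by
  have hprod : (fun φ : ι → ℝ => Real.exp (-b * ∑ x, (φ x) ^ 2)) =
      fun φ => ∏ x, Real.exp (-b * (φ x) ^ 2) := by
    ext φ
    rw [← Real.exp_sum, Finset.mul_sum]
  rw [hprod]
  exact Integrable.fintype_prod (f := fun _ t => Real.exp (-b * t ^ 2))
    fun _ => by simpa [sq] using integrable_exp_neg_mul_sq hb

theorem mul_le_half_mul_sq_add_sq_div {a : ℝ} (ha : 0 < a) (l t : ℝ) :
    l * t ≤ a / 2 * t ^ 2 + l ^ 2 / (2 * a) := by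
  have hsq : 0 ≤ (a * t - l) ^ 2 / (2 * a) := by positivity
  have hexpand : (a * t - l) ^ 2 / (2 * a) = a / 2 * t ^ 2 + l ^ 2 / (2 * a) - l * t := by
    field_simp
    ring
  linarith

theorem Finset.sum_mul_le_half_mul_sum_sq_add {ι : Type*} (s : Finset ι) {a : ℝ} (ha : 0 < a)
    (l φ : ι → ℝ) :
    ∑ x ∈ s, l x * φ x ≤ a / 2 * ∑ x ∈ s, (φ x) ^ 2 + (∑ x ∈ s, (l x) ^ 2) / (2 * a) := by
  rw [Finset.mul_sum, Finset.sum_div, ← Finset.sum_add_distrib]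
  exact Finset.sum_le_sum fun x _ => mul_le_half_mul_sq_add_sq_div ha (l x) (φ x)

section Superstability

variable {Λ : Type*} [Fintype Λ] {a β c₀ : ℝ} {lam : Λ → ℝ} {H H' : (Λ → ℝ) → ℝ}

theorem exp_neg_mul_sub_le_mul_exp_neg_sum_sq (ha : 0 < a) (hβ : 0 < β)
    (hform : ∀ φ, H φ = a * (∑ x, (φ x) ^ 2) + H' φ) (hlow : ∀ φ, c₀ ≤ H' φ) (φ : Λ → ℝ) :
    Real.exp (-β * (H φ - ∑ x, lam x * φ x)) ≤
      Real.exp (β * ((∑ x, (lam x) ^ 2) / (2 * a) - c₀)) *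
        Real.exp (-(β * a / 2) * ∑ x, (φ x) ^ 2) := by
  rw [← Real.exp_add, Real.exp_le_exp, hform φ]
  have hyoung := Finset.univ.sum_mul_le_half_mul_sum_sq_add ha lam φ
  have hexponent : c₀ - (∑ x, (lam x) ^ 2) / (2 * a) ≤
      H' φ - ∑ x, lam x * φ x + a / 2 * ∑ x, (φ x) ^ 2 := by linarith [hlow φ]
  linarith [mul_le_mul_of_nonneg_left hexponent hβ.le]

theorem integrable_exp_neg_mul_sub (ha : 0 < a) (hβ : 0 < β) (hH : Measurable H)
    (hform : ∀ φ, H φ = a * (∑ x, (φ x) ^ 2) + H' φ) (hlow : ∀ φ, c₀ ≤ H' φ) :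
    Integrable (fun φ : Λ → ℝ => Real.exp (-β * (H φ - ∑ x, lam x * φ x))) := by
  have hmeas : Measurable fun φ : Λ → ℝ => Real.exp (-β * (H φ - ∑ x, lam x * φ x)) := by
    have hlin : Measurable fun φ : Λ → ℝ => ∑ x, lam x * φ x :=
      Finset.measurable_sum _ fun x _ => by fun_prop
    exact Real.measurable_exp.comp ((hH.sub hlin).const_mul (-β))
  refine ((integrable_exp_neg_mul_sum_sq Λ (by positivity : 0 < β * a / 2)).const_mul
    (Real.exp (β * ((∑ x, (lam x) ^ 2) / (2 * a) - c₀)))).mono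
    hmeas.aestronglyMeasurable (Filter.Eventually.of_forall fun φ => ?_)
  rw [Real.norm_of_nonneg (Real.exp_nonneg _), Real.norm_of_nonneg (by positivity)]
  exact exp_neg_mul_sub_le_mul_exp_neg_sum_sq ha hβ hform hlow φ

end Superstability

theorem gibbs_density_superstable_bound_general
    (Λ : Type*) [Fintype Λ]
    (a β c₀ : ℝ) (ha : 0 < a) (hβ : 0 < β) (lam : Λ → ℝ)
    (H H' : (Λ → ℝ) → ℝ) (hH : Measurable H)
    (hform : ∀ φ : Λ → ℝ, H φ = a * (∑ x, (φ x) ^ 2) + H' φ)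
    (hlow : ∀ φ : Λ → ℝ, c₀ ≤ H' φ) :
    Integrable (fun φ : Λ → ℝ => Real.exp (-β * (H φ - ∑ x, lam x * φ x))) ∧
    0 < (∫ φ : Λ → ℝ, Real.exp (-β * (H φ - ∑ x, lam x * φ x))) ∧
    ∃ c : ℝ, 0 < c ∧ ∀ φ : Λ → ℝ,
      (∫ ψ : Λ → ℝ, Real.exp (-β * (H ψ - ∑ x, lam x * ψ x)))⁻¹ *
          Real.exp (-β * (H φ - ∑ x, lam x * φ x)) ≤
        c * Real.exp (-(β * a / 2) * ∑ x, (φ x) ^ 2) := by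
  have hint := integrable_exp_neg_mul_sub (lam := lam) ha hβ hH hform hlow
  have hZ := integral_exp_pos hint
  refine ⟨hint, hZ, _, mul_pos (inv_pos.mpr hZ)
    (Real.exp_pos (β * ((∑ x, (lam x) ^ 2) / (2 * a) - c₀))), fun φ => ?_⟩
  rw [mul_assoc]
  exact mul_le_mul_of_nonneg_left (exp_neg_mul_sub_le_mul_exp_neg_sum_sq ha hβ hform hlow φ)
    (inv_nonneg.mpr hZ.le)

/-- Superstability estimate: for H(φ) = a‖φ‖₂² + H'(φ) with H'
bounded below everywhere and bounded above on {max|φ_x| ≤ 1}, the Gibbs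
partition function Z is finite and positive, and the Gibbs density with
chemical potential λ is bounded by c·exp(−(βa/2)‖φ‖₂²). -/
theorem gibbs_density_superstable_bound
    (Λ : Type*) [Fintype Λ] [Nonempty Λ]
    (a β c₀ c₁ : ℝ) (ha : 0 < a) (hβ : 0 < β) (lam : Λ → ℝ)
    (H H' : (Λ → ℝ) → ℝ) (hH : Measurable H)
    (hform : ∀ φ : Λ → ℝ, H φ = a * (∑ x, (φ x) ^ 2) + H' φ)
    (hlow : ∀ φ : Λ → ℝ, c₀ ≤ H' φ)
    (hup : ∀ φ : Λ → ℝ, (∀ x, |φ x| ≤ 1) → H' φ ≤ c₁) :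
    Integrable (fun φ : Λ → ℝ => Real.exp (-β * (H φ - ∑ x, lam x * φ x))) ∧
    0 < (∫ φ : Λ → ℝ, Real.exp (-β * (H φ - ∑ x, lam x * φ x))) ∧
    ∃ c : ℝ, 0 < c ∧ ∀ φ : Λ → ℝ,
      (∫ ψ : Λ → ℝ, Real.exp (-β * (H ψ - ∑ x, lam x * ψ x)))⁻¹ *
          Real.exp (-β * (H φ - ∑ x, lam x * φ x)) ≤
        c * Real.exp (-(β * a / 2) * ∑ x, (φ x) ^ 2) :=
  gibbs_density_superstable_bound_general Λ a β c₀ ha hβ lam H H' hH hform hlow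
end

section
/- Fix d ≥ 1, n ≥ 1 and constants a > 0, b ∈ ℝ. Let μ be a probability measure on ℝ^𝒞 (with the product σ-algebra) such that μ(|φ_x| ≥ S) ≤ e^{−aS⁴ + b} for every x ∈ 𝒞 and every S > 0. Then for every a' with 0 < a' < a there exists b' ∈ ℝ such that for every integer N > n: μ(there exists x ∈ 𝒞 with ‖x‖_∞ > N and |φ_x| > (log ‖x‖_∞)^{1/3}) ≤ e^{−a'(log N)^{4/3} + b'}. In particular μ gives probability 1 to the set 𝒢 of configurations φ for which there exists N with |φ_x| ≤ (log ‖x‖_∞)^{1/3} for all x ∈ 𝒞 with ‖x‖_∞ > N. -/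
open Finset

open MeasureTheory

/-- The ℓ^∞ norm of a lattice point. -/
def normInf {k : ℕ} (x : Pt k) : ℕ :=
  max x.1.natAbs (Finset.univ.sup fun i => (x.2 i).natAbs)

/-!
The sites at scale `m = ‖x‖_∞` number at most `(2m+1)^d`, and each is bad with probability at
most `e^{-a (log m)^{4/3} + b}`. Since `(log m)^{4/3}` outgrows every multiple of `log m`, the
union bound at scale `m > N` is at most `e^{-a' (log N)^{4/3} + M} / m²`, and summing
`1/m² ≤ π²/6` gives the tail estimate. The complement of `𝒢` lies in the bad event for every `N`,
so it is null.
-/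

open Real Filter Topology

lemma mul_le_mul_rpow_four_thirds_add_mul_pow {c ε t : ℝ} (hε : 0 < ε) (hc : 0 ≤ c)
    (ht : 0 ≤ t) : c * t ≤ ε * t ^ ((4 : ℝ) / 3) + c * (c / ε) ^ 3 := by
  rcases le_or_gt t ((c / ε) ^ 3) with hsmall | hlarge
  · nlinarith [mul_le_mul_of_nonneg_left hsmall hc, show 0 ≤ ε * t ^ ((4 : ℝ) / 3) by positivity]
  · have hcε : 0 ≤ c / ε := by positivity
    have ht0 : 0 < t := lt_of_le_of_lt (by positivity) hlarge
    have hroot : c / ε ≤ t ^ ((1 : ℝ) / 3) := by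
      calc c / ε = ((c / ε) ^ 3) ^ ((1 : ℝ) / 3) := by
            rw [← Real.rpow_natCast, ← Real.rpow_mul hcε]; norm_num
        _ ≤ t ^ ((1 : ℝ) / 3) := by gcongr
    have hsplit : t ^ ((4 : ℝ) / 3) = t * t ^ ((1 : ℝ) / 3) := by
      rw [show (4 : ℝ) / 3 = 1 + 1 / 3 by norm_num, Real.rpow_add ht0, Real.rpow_one]
    calc c * t = ε * (t * (c / ε)) := by field_simp
      _ ≤ ε * (t * t ^ ((1 : ℝ) / 3)) := by gcongr
      _ ≤ ε * t ^ ((4 : ℝ) / 3) + c * (c / ε) ^ 3 := by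
        rw [hsplit]; exact le_add_of_nonneg_right (by positivity)

lemma exists_pow_mul_exp_le {a a' : ℝ} (k : ℕ) (b : ℝ) (ha' : 0 ≤ a') (haa' : a' < a) :
    ∃ M : ℝ, ∀ N m : ℕ, 0 < N → N ≤ m →
      (2 * (m : ℝ) + 1) ^ (k + 1) * exp (-a * log m ^ ((4 : ℝ) / 3) + b) ≤
        exp (-a' * log N ^ ((4 : ℝ) / 3) + M) / (m : ℝ) ^ 2 := by
  -- `c log m` pays for the `(k+1) log m` of the site count and the `2 log m` of the factor `1/m²`
  set c : ℝ := k + 3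
  set M : ℝ := c * (c / (a - a')) ^ 3 + (k + 1) * log 3 + b
  refine ⟨M, fun N m hN hNm => ?_⟩
  have hm : (1 : ℝ) ≤ m := by exact_mod_cast hN.trans_le hNm
  have hlog : 0 ≤ log m := log_nonneg hm
  have hcount : (2 * (m : ℝ) + 1) ^ (k + 1) ≤ exp ((k + 1) * (log 3 + log m)) := by
    rw [← log_mul (by norm_num) (by positivity),
      show (k : ℝ) + 1 = ((k + 1 : ℕ) : ℝ) by push_cast; ring, ← log_pow, exp_log (by positivity)]
    gcongr
    linarith
  have hlinear :=
    mul_le_mul_rpow_four_thirds_add_mul_pow (c := c) (sub_pos.2 haa') (by positivity) hlog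
  have hscale : a' * log N ^ ((4 : ℝ) / 3) ≤ a' * log m ^ ((4 : ℝ) / 3) := by gcongr
  calc (2 * (m : ℝ) + 1) ^ (k + 1) * exp (-a * log m ^ ((4 : ℝ) / 3) + b)
      ≤ exp ((k + 1) * (log 3 + log m)) * exp (-a * log m ^ ((4 : ℝ) / 3) + b) := by gcongr
    _ ≤ exp (-a' * log N ^ ((4 : ℝ) / 3) + M - 2 * log m) := by
      rw [← exp_add]
      gcongr
      linarith
    _ = _ := by
      rw [exp_sub, show 2 * log m = log ((m : ℝ) ^ 2) by rw [log_pow]; norm_num,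
        exp_log (by positivity)]

lemma card_Icc_prod_Icc_neg_natCast (k m : ℕ) :
    #(Icc (-(m : ℤ)) m ×ˢ Icc (-(m : Fin k → ℤ)) m) = (2 * m + 1) ^ (k + 1) := by
  have hside : ((m : ℤ) + 1 + m).toNat = 2 * m + 1 := by omega
  simp [Pi.card_Icc, Int.card_Icc, hside, pow_succ']

lemma mem_Icc_prod_Icc_of_normInf_le {k m : ℕ} {x : Pt k} (hx : normInf x ≤ m) :
    x ∈ Icc (-(m : ℤ)) m ×ˢ Icc (-(m : Fin k → ℤ)) m := by
  simp only [normInf, max_le_iff, Finset.sup_le_iff, Finset.mem_univ, true_implies] at hx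
  simp only [Finset.mem_product, Finset.mem_Icc, Pi.le_def, Pi.neg_apply, Pi.natCast_apply]
  refine ⟨by omega, fun i => ?_, fun i => ?_⟩ <;> have := hx.2 i <;> omega

section TailBound

variable {k : ℕ} {a b : ℝ} {μ : Measure (Pt k → ℝ)} {s : Set (Pt k)}

lemma measure_exists_normInf_eq_lt_abs_le
    (hμ : ∀ x ∈ s, ∀ S : ℝ, 0 < S → μ {φ | S ≤ |φ x|} ≤ ENNReal.ofReal (exp (-a * S ^ 4 + b)))
    {m : ℕ} (hm : 1 < m) :
    μ {φ | ∃ x ∈ s, normInf x = m ∧ log m ^ ((1 : ℝ) / 3) < |φ x|} ≤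
      ENNReal.ofReal ((2 * (m : ℝ) + 1) ^ (k + 1) * exp (-a * log m ^ ((4 : ℝ) / 3) + b)) := by
  classical
  set S : ℝ := log m ^ ((1 : ℝ) / 3)
  set sites := (Icc (-(m : ℤ)) m ×ˢ Icc (-(m : Fin k → ℤ)) m).filter (· ∈ s)
  have hS : 0 < S := rpow_pos_of_pos (log_pos (by exact_mod_cast hm)) _
  have hS4 : S ^ 4 = log m ^ ((4 : ℝ) / 3) := by
    rw [← Real.rpow_natCast, ← Real.rpow_mul (log_nonneg (by exact_mod_cast hm.le))]
    norm_num
  have hcover : {φ : Pt k → ℝ | ∃ x ∈ s, normInf x = m ∧ S < |φ x|} ⊆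
      ⋃ x ∈ sites, {φ | S ≤ |φ x|} := by
    rintro φ ⟨x, hxs, hxm, hφ⟩
    exact Set.mem_biUnion
      (Finset.mem_filter.2 ⟨mem_Icc_prod_Icc_of_normInf_le hxm.le, hxs⟩) hφ.le
  calc μ {φ | ∃ x ∈ s, normInf x = m ∧ S < |φ x|}
      ≤ ∑ x ∈ sites, μ {φ | S ≤ |φ x|} :=
        (measure_mono hcover).trans (measure_biUnion_finset_le _ _)
    _ ≤ #sites • ENNReal.ofReal (exp (-a * log m ^ ((4 : ℝ) / 3) + b)) := by
      refine Finset.sum_le_card_nsmul _ _ _ fun x hx => ?_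
      simpa only [hS4] using hμ x (Finset.mem_filter.1 hx).2 S hS
    _ ≤ ((2 * m + 1) ^ (k + 1) : ℕ) • ENNReal.ofReal (exp (-a * log m ^ ((4 : ℝ) / 3) + b)) := by
      gcongr
      exact (Finset.card_filter_le _ _).trans (card_Icc_prod_Icc_neg_natCast k m).le
    _ = _ := by
      rw [nsmul_eq_mul, ENNReal.ofReal_mul (by positivity)]
      norm_cast

theorem exists_measure_exists_lt_normInf_lt_abs_le
    (hμ : ∀ x ∈ s, ∀ S : ℝ, 0 < S → μ {φ | S ≤ |φ x|} ≤ ENNReal.ofReal (exp (-a * S ^ 4 + b)))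
    {a' : ℝ} (ha' : 0 ≤ a') (haa' : a' < a) :
    ∃ b' : ℝ, ∀ N : ℕ, 0 < N →
      μ {φ | ∃ x ∈ s, N < normInf x ∧ log (normInf x) ^ ((1 : ℝ) / 3) < |φ x|} ≤
        ENNReal.ofReal (exp (-a' * log N ^ ((4 : ℝ) / 3) + b')) := by
  obtain ⟨M, hM⟩ := exists_pow_mul_exp_le k b ha' haa'
  refine ⟨M + log (π ^ 2 / 6), fun N hN => ?_⟩
  set C := exp (-a' * log N ^ ((4 : ℝ) / 3) + M)
  set bad : ℕ → Set (Pt k → ℝ) := fun j =>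
    {φ | ∃ x ∈ s, normInf x = N + j + 1 ∧ log ((N + j + 1 : ℕ) : ℝ) ^ ((1 : ℝ) / 3) < |φ x|}
  have hcover : {φ : Pt k → ℝ | ∃ x ∈ s, N < normInf x ∧
      log (normInf x) ^ ((1 : ℝ) / 3) < |φ x|} ⊆ ⋃ j, bad j := by
    rintro φ ⟨x, hxs, hNx, hφ⟩
    obtain ⟨j, hj⟩ := Nat.exists_eq_add_of_lt hNx
    exact Set.mem_iUnion.2 ⟨j, x, hxs, hj, hj ▸ hφ⟩
  have hzeta : ∑' n : ℕ, ENNReal.ofReal (1 / (n : ℝ) ^ 2) = ENNReal.ofReal (π ^ 2 / 6) := by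
    rw [← ENNReal.ofReal_tsum_of_nonneg (fun _ => by positivity) hasSum_zeta_two.summable,
      hasSum_zeta_two.tsum_eq]
  calc _ ≤ ∑' j, μ (bad j) := (measure_mono hcover).trans (measure_iUnion_le _)
    _ ≤ ∑' j : ℕ, ENNReal.ofReal C * ENNReal.ofReal (1 / ((N + j + 1 : ℕ) : ℝ) ^ 2) := by
      refine ENNReal.tsum_le_tsum fun j =>
        (measure_exists_normInf_eq_lt_abs_le hμ (by omega)).trans ?_
      rw [← ENNReal.ofReal_mul (exp_pos _).le, ← div_eq_mul_one_div]
      exact ENNReal.ofReal_le_ofReal (hM N _ hN (by omega))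
    _ ≤ ENNReal.ofReal C * ∑' n : ℕ, ENNReal.ofReal (1 / (n : ℝ) ^ 2) := by
      rw [ENNReal.tsum_mul_left]
      exact mul_le_mul_right (ENNReal.tsum_comp_le_tsum_of_injective (fun i j h => by omega)
        fun n : ℕ => ENNReal.ofReal (1 / (n : ℝ) ^ 2)) _
    _ = _ := by
      rw [hzeta, ← ENNReal.ofReal_mul (exp_pos _).le, ← add_assoc,
        exp_add (_ + M), exp_log (by positivity)]

end TailBound

lemma tendsto_ofReal_exp_neg_mul_log_rpow {a : ℝ} (ha : 0 < a) (b : ℝ) :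
    Tendsto (fun N : ℕ => ENNReal.ofReal (exp (-a * log N ^ ((4 : ℝ) / 3) + b)))
      atTop (𝓝 0) := by
  have hlog : Tendsto (fun N : ℕ => log N ^ ((4 : ℝ) / 3)) atTop atTop :=
    (tendsto_rpow_atTop (by norm_num)).comp
      (tendsto_log_atTop.comp tendsto_natCast_atTop_atTop)
  have hexponent : Tendsto (fun N : ℕ => -a * log N ^ ((4 : ℝ) / 3) + b) atTop atBot :=
    tendsto_atBot_add_const_right _ b (hlog.const_mul_atTop_of_neg (neg_neg_of_pos ha))
  simpa using ENNReal.tendsto_ofReal (tendsto_exp_atBot.comp hexponent)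

-- `μ univ ≤ μ s + μ sᶜ` holds for every set, so `s` need not be measurable
lemma prob_eq_one_of_measure_compl_eq_zero {Ω : Type*} [MeasurableSpace Ω] {μ : Measure Ω}
    [IsProbabilityMeasure μ] {s : Set Ω} (hs : μ sᶜ = 0) : μ s = 1 :=
  le_antisymm prob_le_one (by simpa [hs] using measure_univ_le_add_compl (μ := μ) s)

theorem good_configurations_full_measure_general (k n : ℕ)
    (a b : ℝ) (ha : 0 < a)
    (μ : Measure (Pt k → ℝ)) [IsProbabilityMeasure μ]
    (hμ : ∀ x : Pt k, inC k n x → ∀ S : ℝ, 0 < S →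
      μ {φ | S ≤ |φ x|} ≤ ENNReal.ofReal (Real.exp (-a * S ^ 4 + b))) :
    (∀ a' : ℝ, 0 < a' → a' < a → ∃ b' : ℝ, ∀ N : ℕ, n < N →
      μ {φ | ∃ x : Pt k, inC k n x ∧ N < normInf x ∧
          Real.log (normInf x) ^ ((1 : ℝ) / 3) < |φ x|} ≤
        ENNReal.ofReal (Real.exp (-a' * Real.log N ^ ((4 : ℝ) / 3) + b'))) ∧
    μ {φ | ∃ N : ℕ, ∀ x : Pt k, inC k n x → N < normInf x →
        |φ x| ≤ Real.log (normInf x) ^ ((1 : ℝ) / 3)} = 1 := by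
  refine ⟨fun a' ha' haa' => ?_, prob_eq_one_of_measure_compl_eq_zero ?_⟩
  · obtain ⟨b', hb'⟩ :=
      exists_measure_exists_lt_normInf_lt_abs_le (s := {x | inC k n x}) hμ ha'.le haa'
    exact ⟨b', fun N hN => hb' N (by omega)⟩
  · obtain ⟨b', hb'⟩ := exists_measure_exists_lt_normInf_lt_abs_le (s := {x | inC k n x}) hμ
      (half_pos ha).le (half_lt_self ha)
    refine nonpos_iff_eq_zero.1 <| ge_of_tendsto
      (tendsto_ofReal_exp_neg_mul_log_rpow (half_pos ha) b') (eventually_atTop.2 ⟨1, ?_⟩)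
    refine fun N hN => (measure_mono fun φ hφ => ?_).trans (hb' N hN)
    simpa using not_exists.1 hφ N

/-- Corollary C.2(2): if a probability measure μ on
configurations over 𝒞 satisfies the tail bound μ(|φ_x| ≥ S) ≤ e^{−aS⁴+b} for
all x ∈ 𝒞, then for every 0 < a' < a there is b' with
μ(∃ x ∈ 𝒞, ‖x‖_∞ > N, |φ_x| > (log‖x‖_∞)^{1/3}) ≤ e^{−a'(log N)^{4/3}+b'}
for all N > n; in particular μ(𝒢) = 1 for the set 𝒢 of good configurations. -/
theorem good_configurations_full_measure (k n : ℕ) (hn : 1 ≤ n)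
    (a b : ℝ) (ha : 0 < a)
    (μ : Measure (Pt k → ℝ)) [IsProbabilityMeasure μ]
    (hμ : ∀ x : Pt k, inC k n x → ∀ S : ℝ, 0 < S →
      μ {φ | S ≤ |φ x|} ≤ ENNReal.ofReal (Real.exp (-a * S ^ 4 + b))) :
    (∀ a' : ℝ, 0 < a' → a' < a → ∃ b' : ℝ, ∀ N : ℕ, n < N →
      μ {φ | ∃ x : Pt k, inC k n x ∧ N < normInf x ∧
          Real.log (normInf x) ^ ((1 : ℝ) / 3) < |φ x|} ≤
        ENNReal.ofReal (Real.exp (-a' * Real.log N ^ ((4 : ℝ) / 3) + b'))) ∧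
    μ {φ | ∃ N : ℕ, ∀ x : Pt k, inC k n x → N < normInf x →
        |φ x| ≤ Real.log (normInf x) ^ ((1 : ℝ) / 3)} = 1 :=
  good_configurations_full_measure_general k n a b ha μ hμ
end

section
/- For all m, n ∈ ℕ and all ξ, ζ ∈ ℝ: h_m''(ξ)h_n(ζ) + h_m(ξ)h_n''(ζ) − 2h_m'(ξ)h_n'(ζ) − (ξ − ζ)(h_m'(ξ)h_n(ζ) − h_m(ξ)h_n'(ζ)) = m(h_{m−1}(ξ)h_{n+1}(ζ) − h_m(ξ)h_n(ζ)) + n(h_{m+1}(ξ)h_{n−1}(ζ) − h_m(ξ)h_n(ζ)), where a term carrying the factor m (resp. n) is interpreted as 0 when m = 0 (resp. n = 0). -/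
set_option linter.unusedTactic false


open Polynomial

/-- The probabilist's Hermite polynomial h_m, evaluated at ξ ∈ ℝ. -/
noncomputable def Her (m : ℕ) (ξ : ℝ) : ℝ := aeval ξ (hermite m)

/-- Its first derivative h_m'. -/
noncomputable def Her' (m : ℕ) (ξ : ℝ) : ℝ := aeval ξ (derivative (hermite m))

/-- Its second derivative h_m''. -/
noncomputable def Her'' (m : ℕ) (ξ : ℝ) : ℝ :=
  aeval ξ (derivative (derivative (hermite m)))

lemma derivative_hermite (n : ℕ) :
    derivative (hermite n) = (n : ℤ[X]) * hermite (n - 1) := by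
  induction n with
  | zero => simp [hermite]
  | succ k ih =>
    rw [hermite_succ, derivative_sub, derivative_mul, derivative_X, one_mul, ih,
      derivative_mul, derivative_natCast, zero_mul, zero_add, Nat.add_sub_cancel]
    cases k with
    | zero => simp [hermite]
    | succ j =>
      rw [Nat.add_sub_cancel]
      have : hermite (j + 1) = X * hermite j - derivative (hermite j) := hermite_succ j
      rw [this]
      push_cast
      ring

lemma Her_zero (ξ : ℝ) : Her 0 ξ = 1 := by simp [Her, hermite]
lemma Her'_zero (ξ : ℝ) : Her' 0 ξ = 0 := by simp [Her', hermite]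
lemma Her''_zero (ξ : ℝ) : Her'' 0 ξ = 0 := by simp [Her'', hermite]

lemma Her_succ (a : ℕ) (ξ : ℝ) : Her (a + 1) ξ = ξ * Her a ξ - Her' a ξ := by
  simp [Her, Her', hermite_succ]

lemma Her'_succ (a : ℕ) (ξ : ℝ) : Her' (a + 1) ξ = (a + 1 : ℝ) * Her a ξ := by
  rw [Her', Her, derivative_hermite (a + 1), Nat.add_sub_cancel, map_mul, map_natCast]
  push_cast; ring

lemma Her''_succ (a : ℕ) (ξ : ℝ) : Her'' (a + 1) ξ = (a + 1 : ℝ) * Her' a ξ := by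
  rw [Her'', Her', derivative_hermite (a + 1), Nat.add_sub_cancel, derivative_mul,
    derivative_natCast, zero_mul, zero_add, map_mul, map_natCast]
  push_cast; ring

/-- Bulk duality identity for Hermite polynomials: the
Ginzburg–Landau bond generator applied to h_m(ξ)h_n(ζ) equals the
independent-particle exchange generator applied to the particle numbers (m,n).
(The terms carrying the factor m, resp. n, vanish automatically when m = 0,
resp. n = 0, because of that factor.) -/
theorem hermite_bulk_duality (m n : ℕ) (ξ ζ : ℝ) :
    Her'' m ξ * Her n ζ + Her m ξ * Her'' n ζ - 2 * Her' m ξ * Her' n ζ -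
        (ξ - ζ) * (Her' m ξ * Her n ζ - Her m ξ * Her' n ζ) =
      (m : ℝ) * (Her (m - 1) ξ * Her (n + 1) ζ - Her m ξ * Her n ζ) +
        (n : ℝ) * (Her (m + 1) ξ * Her (n - 1) ζ - Her m ξ * Her n ζ) := by
  have key : ∀ (p : ℕ) (x : ℝ), Her (p + 1 + 1) x
      = x * (x * Her p x - Her' p x) - (p + 1 : ℝ) * Her p x := by
    intro p x
    rw [Her_succ, Her_succ, Her'_succ]
  rcases m with _ | a <;> rcases n with _ | b <;>
    simp only [Her_zero, Her'_zero, Her''_zero, key, Her_succ, Her'_succ, Her''_succ,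
      Nat.add_sub_cancel, Nat.cast_zero, Nat.cast_succ, Nat.zero_sub, Nat.cast_add,
      Nat.cast_one] <;> (try push_cast) <;> ring
end

section
/- Let Λ be a finite set, β > 0, λ : Λ → ℝ, s ∈ ℝ, and H : ℝ^Λ → ℝ a C² function with Z₀ = ∫ e^{−βH(φ)} dφ < ∞; let μ₀ be the probability measure on ℝ^Λ with density Z₀^{−1}e^{−βH}. Fix x ∈ Λ and define the boundary operator L̄f = −(∂H/∂φ_x − s)∂f/∂φ_x + β^{−1}∂²f/∂φ_x², the function g(φ) = exp(β∑_{z∈Λ} λ(z)φ_z), and a_x(φ) = λ(x) − (∂H/∂φ_x)(φ). Then for every smooth compactly supported f : ℝ^Λ → ℝ: ∫ (L̄f)(φ) g(φ) μ₀(dφ) = β ∫ f(φ) g(φ) a_x(φ) (λ(x) − s) μ₀(dφ). -/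
open MeasureTheory

/-- Boundary-adjoint computation: with μ₀ ∝ e^{−βH},
g(φ) = exp(β∑_z λ(z)φ_z) and a_x(φ) = λ(x) − ∂H/∂φ_x, for every smooth
compactly supported f one has
∫ (L̄f)·g dμ₀ = β ∫ f·g·a_x·(λ(x) − s) dμ₀. -/
theorem boundary_adjoint_on_exponential
    (Λ : Type*) [Fintype Λ] [DecidableEq Λ] (β s : ℝ) (hβ : 0 < β)
    (lam : Λ → ℝ) (H : (Λ → ℝ) → ℝ) (hH : ContDiff ℝ 2 H)
    (hZ : Integrable (fun φ : Λ → ℝ => Real.exp (-β * H φ)))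
    (x : Λ) (f : (Λ → ℝ) → ℝ) (hf : ContDiff ℝ (⊤ : ℕ∞) f)
    (hsupp : HasCompactSupport f) :
    ∫ φ, Lbar β H x s f φ * Real.exp (β * ∑ z, lam z * φ z)
        ∂(volume.withDensity fun φ => ENNReal.ofReal
          ((∫ ψ : Λ → ℝ, Real.exp (-β * H ψ))⁻¹ * Real.exp (-β * H φ))) =
      β * ∫ φ, f φ * Real.exp (β * ∑ z, lam z * φ z) *
          (lam x - pd H x φ) * (lam x - s)
        ∂(volume.withDensity fun φ => ENNReal.ofReal
          ((∫ ψ : Λ → ℝ, Real.exp (-β * H ψ))⁻¹ * Real.exp (-β * H φ))) := by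
  classical
  set Z : ℝ := ∫ ψ : Λ → ℝ, Real.exp (-β * H ψ) with hZdef
  have hZnn : 0 ≤ Z⁻¹ := by
    have : 0 ≤ Z := integral_nonneg fun ψ => (Real.exp_pos _).le
    positivity
  -- the linear functional φ ↦ ∑ lam z * φ z
  set Lc : (Λ → ℝ) →L[ℝ] ℝ := ∑ z, lam z • ContinuousLinearMap.proj z with hLcdef
  have hLc : ∀ φ : Λ → ℝ, Lc φ = ∑ z, lam z * φ z := by intro φ; simp [hLcdef]
  have hLcx : Lc (Pi.single x 1) = lam x := by
    rw [hLc]; simp [Pi.single_apply, mul_comm]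
  -- the weight G = exp(β∑λφ − βH)
  set G : (Λ → ℝ) → ℝ := fun φ => Real.exp (β * Lc φ - β * H φ) with hGdef
  have hHdiff : Differentiable ℝ H := hH.differentiable (by norm_num)
  have hGderiv : ∀ φ, HasFDerivAt G
      (Real.exp (β * Lc φ - β * H φ) • (β • Lc - β • fderiv ℝ H φ)) φ := by
    intro φ
    exact ((Lc.hasFDerivAt.const_mul β).sub
      ((hHdiff φ).hasFDerivAt.const_mul β)).exp
  have hGdiff : Differentiable ℝ G := fun φ => (hGderiv φ).differentiableAt
  have hpdG : ∀ φ, fderiv ℝ G φ (Pi.single x 1)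
      = β * (lam x - pd H x φ) * G φ := by
    intro φ
    rw [(hGderiv φ).fderiv]
    simp only [ContinuousLinearMap.smul_apply, ContinuousLinearMap.sub_apply,
      ContinuousLinearMap.smul_apply, hLcx, smul_eq_mul, pd, hGdef]
    ring
  have hGcont : Continuous G := by
    apply Real.continuous_exp.comp
    exact (continuous_const.mul Lc.continuous).sub (continuous_const.mul hH.continuous)
  have hpdHcont : Continuous (pd H x) :=
    ((hH.fderiv_right (m := 1) (by norm_num)).clm_apply contDiff_const).continuous
  -- first partial of f
  have hp : ContDiff ℝ (⊤ : ℕ∞) (pd f x) :=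
    (hf.fderiv_right (by simp)).clm_apply contDiff_const
  have hpsupp : HasCompactSupport (pd f x) :=
    (hsupp.fderiv (𝕜 := ℝ)).comp_left
      (g := fun L : (Λ → ℝ) →L[ℝ] ℝ => L (Pi.single x 1)) rfl
  have hq : ContDiff ℝ (⊤ : ℕ∞) (pd (pd f x) x) :=
    (hp.fderiv_right (by simp)).clm_apply contDiff_const
  have hqsupp : HasCompactSupport (pd (pd f x) x) :=
    (hpsupp.fderiv (𝕜 := ℝ)).comp_left
      (g := fun L : (Λ → ℝ) →L[ℝ] ℝ => L (Pi.single x 1)) rfl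
  -- integrability helper
  have hAcont : Continuous fun φ => (lam x - pd H x φ) * G φ :=
    (continuous_const.sub hpdHcont).mul hGcont
  have key : ∀ u : (Λ → ℝ) → ℝ, Continuous u → HasCompactSupport u →
      ∀ c : (Λ → ℝ) → ℝ, Continuous c →
      Integrable (fun φ => c φ * u φ) := by
    intro u hu hcs c hc
    exact (hc.mul hu).integrable_of_hasCompactSupport (hcs.mul_left)
  have I1 : Integrable (fun φ => G φ * pd f x φ) :=
    key _ hp.continuous hpsupp _ hGcont
  have I2 : Integrable (fun φ => (lam x - pd H x φ) * G φ * pd f x φ) :=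
    key _ hp.continuous hpsupp _ hAcont
  have I3 : Integrable (fun φ => G φ * pd (pd f x) x φ) :=
    key _ hq.continuous hqsupp _ hGcont
  have I4 : Integrable (fun φ => (lam x - pd H x φ) * G φ * f φ) :=
    key _ hf.continuous hsupp _ hAcont
  -- integration by parts
  have ibp : ∀ u : (Λ → ℝ) → ℝ, ContDiff ℝ (⊤ : ℕ∞) u → HasCompactSupport u →
      Integrable (fun φ => G φ * pd u x φ) →
      Integrable (fun φ => (lam x - pd H x φ) * G φ * u φ) →
      ∫ φ, G φ * pd u x φ
        = -(β * ∫ φ, (lam x - pd H x φ) * G φ * u φ) := by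
    intro u hu hcs Ia Ib
    have husupp : HasCompactSupport (pd u x) :=
      (hcs.fderiv (𝕜 := ℝ)).comp_left
        (g := fun L : (Λ → ℝ) →L[ℝ] ℝ => L (Pi.single x 1)) rfl
    have hucont : Continuous (pd u x) :=
      ((hu.fderiv_right (m := (⊤ : ℕ∞)) (by simp)).clm_apply contDiff_const).continuous
    have Ic : Integrable (fun φ => G φ * u φ) :=
      key _ hu.continuous hcs _ hGcont
    have h := integral_mul_fderiv_eq_neg_fderiv_mul_of_integrable
      (μ := (volume : Measure (Λ → ℝ))) (f := G) (g := u) (v := Pi.single x 1)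
      ?_ ?_ Ic (fun y _ => hGdiff y) (fun y _ => hu.differentiable (by simp) y)
    · rw [show (fun φ => G φ * pd u x φ)
          = fun φ => G φ * fderiv ℝ u φ (Pi.single x 1) from rfl, h]
      rw [show (fun φ => fderiv ℝ G φ (Pi.single x 1) * u φ)
          = fun φ => β * ((lam x - pd H x φ) * G φ * u φ) from
        funext fun φ => by rw [hpdG φ]; ring]
      rw [integral_const_mul]
    · rw [show (fun φ => fderiv ℝ G φ (Pi.single x 1) * u φ)
          = fun φ => β * ((lam x - pd H x φ) * G φ * u φ) from
        funext fun φ => by rw [hpdG φ]; ring]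
      exact Ib.const_mul β
    · exact key _ hucont husupp _ hGcont
  have e1 : ∫ φ, G φ * pd f x φ
      = -(β * ∫ φ, (lam x - pd H x φ) * G φ * f φ) := ibp f hf hsupp I1 I4
  have e2 : ∫ φ, G φ * pd (pd f x) x φ
      = -(β * ∫ φ, (lam x - pd H x φ) * G φ * pd f x φ) :=
    ibp (pd f x) hp hpsupp I3 I2
  -- main identity over plain volume
  have main : ∫ φ, Lbar β H x s f φ * G φ
      = (s - lam x) * ∫ φ, G φ * pd f x φ := by
    have hsplit : (fun φ => Lbar β H x s f φ * G φ)
        = fun φ => (s - lam x) * (G φ * pd f x φ)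
          + ((lam x - pd H x φ) * G φ * pd f x φ
            + β⁻¹ * (G φ * pd (pd f x) x φ)) := by
      funext φ
      simp only [Lbar]
      ring
    have I3' : Integrable (fun φ => β⁻¹ * (G φ * pd (pd f x) x φ)) :=
      I3.const_mul β⁻¹
    have I23 : Integrable (fun φ => (lam x - pd H x φ) * G φ * pd f x φ
        + β⁻¹ * (G φ * pd (pd f x) x φ)) := I2.add I3'
    rw [hsplit, integral_add (I1.const_mul (s - lam x)) I23,
      integral_add I2 I3', integral_const_mul, integral_const_mul, e2]
    have hβ' : β ≠ 0 := ne_of_gt hβ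
    field_simp
    ring
  -- reduce withDensity integrals
  have hmeas : Measurable fun φ : Λ → ℝ =>
      Real.toNNReal (Z⁻¹ * Real.exp (-β * H φ)) :=
    ((continuous_const.mul
      (Real.continuous_exp.comp (continuous_const.mul hH.continuous))).measurable).real_toNNReal
  have hred : ∀ h : (Λ → ℝ) → ℝ,
      ∫ φ, h φ ∂(volume.withDensity fun φ => ENNReal.ofReal
          (Z⁻¹ * Real.exp (-β * H φ)))
        = ∫ φ, (Z⁻¹ * Real.exp (-β * H φ)) * h φ := by
    intro h
    rw [show (fun φ : Λ → ℝ => ENNReal.ofReal (Z⁻¹ * Real.exp (-β * H φ)))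
        = fun φ => ((Real.toNNReal (Z⁻¹ * Real.exp (-β * H φ)) : NNReal) : ENNReal)
        from rfl]
    rw [integral_withDensity_eq_integral_smul hmeas]
    congr 1
    funext φ
    rw [NNReal.smul_def, smul_eq_mul, Real.coe_toNNReal]
    positivity
  have hGmul : ∀ φ : Λ → ℝ,
      Real.exp (-β * H φ) * Real.exp (β * ∑ z, lam z * φ z) = G φ := by
    intro φ
    show Real.exp (-β * H φ) * Real.exp (β * ∑ z, lam z * φ z)
      = Real.exp (β * Lc φ - β * H φ)
    rw [← Real.exp_add, hLc φ]
    ring_nf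
  rw [hred, hred]
  rw [show (fun φ => Z⁻¹ * Real.exp (-β * H φ)
        * (Lbar β H x s f φ * Real.exp (β * ∑ z, lam z * φ z)))
      = fun φ => Z⁻¹ * (Lbar β H x s f φ * G φ) from
    funext fun φ => by rw [← hGmul φ]; ring]
  rw [show (fun φ => Z⁻¹ * Real.exp (-β * H φ)
        * (f φ * Real.exp (β * ∑ z, lam z * φ z) * (lam x - pd H x φ) * (lam x - s)))
      = fun φ => (Z⁻¹ * (lam x - s)) * ((lam x - pd H x φ) * G φ * f φ) from
    funext fun φ => by rw [← hGmul φ]; ring]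
  rw [integral_const_mul, integral_const_mul, main, e1]
  ring
end
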